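/- arXiv:1810.08020 — 8 statements merged into one kernel-verified Lean document; each statement's English description precedes it below -/
import Mathlib

section
/- The singular Cauchy problem 3x·ψ'' + 6x·(ψ')³ − 4ψ·(ψ')² − 3ψ' = 0 with ψ(0) = 1 and ψ'(0) = −3/4 has a unique real-analytic solution ψ(x) in a neighbourhood of x = 0. -/
/-!
Write `ψ = ∑ aₙ xⁿ`. The coefficient of `x^(m+1)` in `3xψ'' + 6xψ'³ − 4ψψ'² − 3ψ'` is
`(3m − 8 a₀ a₁)(m + 2) a_{m+2}` plus a polynomial in `a₀, …, a_{m+1}`. For `a₀ a₁ = −3/4` the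
leading factor is `3 (m + 2)² ≠ 0`, so the initial data determine a unique formal solution, and
every analytic solution has it as its Taylor series.

The formal solution converges: `bₙ = (n + 1) aₙ₊₁` satisfies `|bₙ| ≤ Mⁿ / (n + 1)²` for a large
`M`. Up to a factor `16` the weights `1 / (n + 1)²` are stable under Cauchy products, and the
recursion divides by `3 (m + 2)`, so the bound propagates once `m` is large; the finitely many
earlier terms are absorbed into `M`.
-/

/-- `ψ` is an analytic solution near `0` of the singular Cauchy problem
`3x ψ'' + 6x (ψ')³ − 4ψ (ψ')² − 3ψ' = 0`, `ψ(0) = 1`, `ψ'(0) = −3/4`. -/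
def GavrilovODE (ψ : ℝ → ℝ) : Prop :=
  AnalyticAt ℝ ψ 0 ∧ ψ 0 = 1 ∧ deriv ψ 0 = -(3/4) ∧
    ∀ᶠ x in nhds (0:ℝ),
      3 * x * deriv (deriv ψ) x + 6 * x * (deriv ψ x)^3
        - 4 * ψ x * (deriv ψ x)^2 - 3 * deriv ψ x = 0

open Filter Finset
open scoped Topology

namespace PowerSeries

lemma coeff_ofNat_mul {R : Type*} [CommSemiring R] (k n : ℕ) [k.AtLeastTwo] (f : R⟦X⟧) :
    coeff n (ofNat(k) * f) = ofNat(k) * coeff n f := by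
  rw [← map_ofNat (C (R := R)) k, coeff_C_mul]

lemma derivative_add_X_pow_mul {R : Type*} [CommRing R] (g h : R⟦X⟧) (n : ℕ) :
    d⁄dX R (g + X ^ (n + 1) * h) = d⁄dX R g + X ^ n * (((n : R⟦X⟧) + 1) * h + X * d⁄dX R h) := by
  simp only [map_add, Derivation.leibniz, Derivation.leibniz_pow, derivative_X, smul_eq_mul,
    nsmul_eq_mul, Nat.add_sub_cancel]
  push_cast
  ring

def HasGeomBound (f : ℝ⟦X⟧) : Prop :=
  ∃ C M : ℝ, 0 < C ∧ 1 ≤ M ∧ ∀ n, |coeff n f| ≤ C * M ^ n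

namespace HasGeomBound

variable {f g : ℝ⟦X⟧}

lemma add (hf : HasGeomBound f) (hg : HasGeomBound g) : HasGeomBound (f + g) := by
  obtain ⟨C, M, hC, hM, hf⟩ := hf
  obtain ⟨D, N, hD, hN, hg⟩ := hg
  have hM0 : 0 ≤ M := by linarith
  have hN0 : 0 ≤ N := by linarith
  refine ⟨C + D, max M N, by positivity, hM.trans (le_max_left _ _), fun n => ?_⟩
  calc |coeff n (f + g)| ≤ |coeff n f| + |coeff n g| := by rw [map_add]; exact abs_add_le _ _
    _ ≤ C * max M N ^ n + D * max M N ^ n := by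
        gcongr
        · exact (hf n).trans (by gcongr; exact le_max_left _ _)
        · exact (hg n).trans (by gcongr; exact le_max_right _ _)
    _ = (C + D) * max M N ^ n := by ring

lemma neg (hf : HasGeomBound f) : HasGeomBound (-f) := by
  simpa [HasGeomBound] using hf

lemma mul (hf : HasGeomBound f) (hg : HasGeomBound g) : HasGeomBound (f * g) := by
  obtain ⟨C, M, hC, hM, hf⟩ := hf
  obtain ⟨D, N, hD, hN, hg⟩ := hg
  set K := max M N
  have hM0 : 0 ≤ M := by linarith
  have hN0 : 0 ≤ N := by linarith
  have hMK : M ≤ K := le_max_left _ _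
  have hNK : N ≤ K := le_max_right _ _
  refine ⟨C * D, 2 * K, by positivity, by linarith, fun n => ?_⟩
  have hterm : ∀ p ∈ antidiagonal n, |coeff p.1 f * coeff p.2 g| ≤ C * D * K ^ n := by
    rintro ⟨i, j⟩ hij
    rw [HasAntidiagonal.mem_antidiagonal] at hij
    calc |coeff i f * coeff j g| ≤ (C * K ^ i) * (D * K ^ j) := by
          rw [abs_mul]
          gcongr
          · exact (hf i).trans (by gcongr)
          · exact (hg j).trans (by gcongr)
      _ = C * D * K ^ n := by rw [← hij, pow_add]; ring
  calc |coeff n (f * g)| ≤ ∑ p ∈ antidiagonal n, |coeff p.1 f * coeff p.2 g| := by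
        rw [coeff_mul]; exact abs_sum_le_sum_abs _ _
    _ ≤ (n + 1) * (C * D * K ^ n) := by
        simpa using sum_le_card_nsmul _ _ _ hterm
    _ ≤ 2 ^ n * (C * D * K ^ n) := by
        gcongr
        exact_mod_cast Nat.lt_two_pow_self
    _ = C * D * (2 * K) ^ n := by ring

lemma derivative (hf : HasGeomBound f) : HasGeomBound (d⁄dX ℝ f) := by
  obtain ⟨C, M, hC, hM, hf⟩ := hf
  refine ⟨C * M, 2 * M, by positivity, by linarith, fun n => ?_⟩
  calc |coeff n (d⁄dX ℝ f)| = |coeff (n + 1) f| * (n + 1) := by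
        rw [coeff_derivative, abs_mul, abs_of_nonneg (by positivity : (0:ℝ) ≤ n + 1)]
    _ ≤ C * M ^ (n + 1) * 2 ^ n := by
        gcongr
        · exact hf _
        · exact_mod_cast Nat.lt_two_pow_self
    _ = C * M * (2 * M) ^ n := by ring

lemma of_derivative (h : HasGeomBound (d⁄dX ℝ f)) : HasGeomBound f := by
  obtain ⟨C, M, hC, hM, hb⟩ := h
  refine ⟨max C |coeff 0 f|, M, lt_max_of_lt_left hC, hM, ?_⟩
  rintro (_ | n)
  · simp
  have hn : (1 : ℝ) ≤ n + 1 := by simp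
  calc |coeff (n + 1) f| ≤ |coeff (n + 1) f| * (n + 1) := le_mul_of_one_le_right (abs_nonneg _) hn
    _ = |coeff n (d⁄dX ℝ f)| := by
        rw [coeff_derivative, abs_mul, abs_of_nonneg (by positivity : (0 : ℝ) ≤ n + 1)]
    _ ≤ C * M ^ n := hb n
    _ ≤ max C |coeff 0 f| * M ^ (n + 1) := by
        gcongr
        · exact le_max_left _ _
        · linarith

end HasGeomBound

lemma hasGeomBound_one : HasGeomBound 1 :=
  ⟨1, 1, one_pos, le_rfl, fun n => by rw [coeff_one]; split_ifs <;> simp⟩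

lemma hasGeomBound_X : HasGeomBound X :=
  ⟨1, 1, one_pos, le_rfl, fun n => by rw [coeff_X]; split_ifs <;> simp⟩

def convergent : Subring ℝ⟦X⟧ where
  carrier := {f | HasGeomBound f}
  mul_mem' := HasGeomBound.mul
  one_mem' := hasGeomBound_one
  add_mem' := HasGeomBound.add
  zero_mem' := ⟨1, 1, one_pos, le_rfl, fun n => by simp⟩
  neg_mem' := HasGeomBound.neg

lemma mem_convergent {f : ℝ⟦X⟧} : f ∈ convergent ↔ HasGeomBound f := Iff.rfl

noncomputable def sumFun (f : ℝ⟦X⟧) (x : ℝ) : ℝ := ∑' n, coeff n f * x ^ n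

variable {f g : ℝ⟦X⟧} {C M x : ℝ}

lemma summable_norm_of_bound (hb : ∀ n, |coeff n f| ≤ C * M ^ n) (hM : 0 ≤ M)
    (hx : M * |x| < 1) : Summable fun n => ‖coeff n f * x ^ n‖ := by
  refine .of_nonneg_of_le (fun n => norm_nonneg _) (fun n => ?_)
    ((summable_geometric_of_lt_one (by positivity) hx).mul_left C)
  rw [Real.norm_eq_abs, abs_mul, abs_pow, mul_pow, ← mul_assoc]
  gcongr
  exact hb n

lemma HasGeomBound.eventually_summable_norm (hf : HasGeomBound f) :
    ∀ᶠ x in 𝓝 0, Summable fun n => ‖coeff n f * x ^ n‖ := by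
  obtain ⟨C, M, -, hM, hb⟩ := hf
  have hM0 : 0 < M := by linarith
  filter_upwards [Metric.ball_mem_nhds 0 (inv_pos.2 hM0)] with x hx
  rw [Metric.mem_ball, dist_zero_right, Real.norm_eq_abs] at hx
  refine summable_norm_of_bound hb hM0.le ?_
  calc M * |x| < M * M⁻¹ := by gcongr
    _ = 1 := mul_inv_cancel₀ hM0.ne'

lemma sumFun_apply_zero (f : ℝ⟦X⟧) : sumFun f 0 = coeff 0 f := by
  rw [sumFun, tsum_eq_single 0 (fun n hn => by simp [hn])]
  simp

lemma sumFun_zero : sumFun 0 = 0 := by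
  ext x
  simp [sumFun]

lemma sumFun_one : sumFun 1 = 1 := by
  ext x
  rw [sumFun, tsum_eq_single 0 (fun n hn => by simp [coeff_one, hn])]
  simp

lemma sumFun_X : sumFun X = id := by
  ext x
  rw [sumFun, tsum_eq_single 1 (fun n hn => by simp [coeff_X, hn])]
  simp

lemma sumFun_add (hf : Summable fun n => ‖coeff n f * x ^ n‖)
    (hg : Summable fun n => ‖coeff n g * x ^ n‖) :
    sumFun (f + g) x = sumFun f x + sumFun g x := by
  simp only [sumFun, map_add, add_mul]
  exact hf.of_norm.tsum_add hg.of_norm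

lemma sumFun_mul (hf : Summable fun n => ‖coeff n f * x ^ n‖)
    (hg : Summable fun n => ‖coeff n g * x ^ n‖) :
    sumFun (f * g) x = sumFun f x * sumFun g x := by
  rw [sumFun, sumFun, sumFun, tsum_mul_tsum_eq_tsum_sum_antidiagonal_of_summable_norm hf hg]
  refine tsum_congr fun n => ?_
  rw [coeff_mul, sum_mul]
  refine sum_congr rfl fun p hp => ?_
  rw [← HasAntidiagonal.mem_antidiagonal.1 hp, pow_add]
  ring

lemma hasFPowerSeriesAt_sumFun (hf : HasGeomBound f) :
    HasFPowerSeriesAt (sumFun f) (FormalMultilinearSeries.ofScalars ℝ (coeff · f)) 0 := by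
  rw [hasFPowerSeriesAt_iff]
  filter_upwards [hf.eventually_summable_norm] with z hz
  simp only [FormalMultilinearSeries.coeff_ofScalars, smul_eq_mul, zero_add, mul_comm (z ^ _)]
  exact hz.of_norm.hasSum

lemma eq_zero_of_sumFun_eventuallyEq_zero (hf : HasGeomBound f) (h : sumFun f =ᶠ[𝓝 0] 0) :
    f = 0 := by
  have := (FormalMultilinearSeries.ofScalars_series_eq_zero ℝ).1
    ((hasFPowerSeriesAt_sumFun hf).eq_zero_of_eventually h)
  ext n
  simpa using congrFun this n

lemma norm_coeff_mul_deriv_pow_le (hb : ∀ n, |coeff n f| ≤ C * M ^ n) (hC : 0 < C) (hM : 1 ≤ M)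
    {y : ℝ} (hy : |y| ≤ (2 * M)⁻¹) (n : ℕ) :
    ‖coeff n f * (n * y ^ (n - 1))‖ ≤ 2 * C * M * (n * 2⁻¹ ^ n) := by
  have hM0 : 0 < M := by linarith
  rcases n with _ | n
  · simp
  calc ‖coeff (n + 1) f * ((n + 1 : ℕ) * y ^ n)‖
      = |coeff (n + 1) f| * ((n + 1 : ℕ) * |y| ^ n) := by
        rw [Real.norm_eq_abs, abs_mul, abs_mul, abs_pow, Nat.abs_cast]
    _ ≤ (C * M ^ (n + 1)) * ((n + 1 : ℕ) * (2 * M)⁻¹ ^ n) := by gcongr; exact hb _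
    _ = 2 * C * M * ((n + 1 : ℕ) * 2⁻¹ ^ (n + 1)) := by
        have hMn : M ^ n * M⁻¹ ^ n = 1 := by rw [← mul_pow, mul_inv_cancel₀ hM0.ne', one_pow]
        rw [mul_inv, mul_pow]
        linear_combination (C * M * (n + 1 : ℕ) * 2⁻¹ ^ n) * hMn

lemma hasDerivAt_sumFun_of_bound (hb : ∀ n, |coeff n f| ≤ C * M ^ n) (hC : 0 < C) (hM : 1 ≤ M)
    (hx : |x| < (2 * M)⁻¹) : HasDerivAt (sumFun f) (sumFun (d⁄dX ℝ f) x) x := by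
  have hM0 : 0 < M := by linarith
  have hu : Summable fun n : ℕ => 2 * C * M * (n * 2⁻¹ ^ n) := by
    have h2 : ‖(2⁻¹ : ℝ)‖ < 1 := by norm_num
    exact (by simpa using summable_pow_mul_geometric_of_norm_lt_one 1 h2 :
      Summable fun n : ℕ => (n : ℝ) * 2⁻¹ ^ n).mul_left _
  have hball : ∀ {y : ℝ}, y ∈ Metric.ball 0 (2 * M)⁻¹ ↔ |y| < (2 * M)⁻¹ := by
    simp
  have hderiv := hasDerivAt_tsum_of_isPreconnected hu Metric.isOpen_ball
    (convex_ball _ _).isPreconnected (g := fun n y => coeff n f * y ^ n)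
    (g' := fun n y => coeff n f * (n * y ^ (n - 1)))
    (fun n y _ => (hasDerivAt_pow n y).const_mul _)
    (fun n y hy => norm_coeff_mul_deriv_pow_le hb hC hM (hball.1 hy).le n)
    (Metric.mem_ball_self (by positivity))
    (summable_norm_of_bound hb hM0.le (by simp)).of_norm
    (hball.2 hx)
  refine hderiv.congr_deriv ?_
  have hsum : Summable fun n => coeff n f * (n * x ^ (n - 1)) :=
    (hu.of_nonneg_of_le (fun _ => norm_nonneg _)
      (norm_coeff_mul_deriv_pow_le hb hC hM hx.le)).of_norm
  rw [hsum.tsum_eq_zero_add, sumFun]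
  simp only [CharP.cast_eq_zero, zero_mul, mul_zero, zero_add, coeff_derivative,
    Nat.add_sub_cancel, Nat.cast_succ]
  exact tsum_congr fun n => by ring

lemma HasGeomBound.eventually_hasDerivAt (hf : HasGeomBound f) :
    ∀ᶠ x in 𝓝 0, HasDerivAt (sumFun f) (sumFun (d⁄dX ℝ f) x) x := by
  obtain ⟨C, M, hC, hM, hb⟩ := hf
  filter_upwards [Metric.ball_mem_nhds 0 (by positivity : 0 < (2 * M)⁻¹)] with x hx
  rw [Metric.mem_ball, dist_zero_right, Real.norm_eq_abs] at hx
  exact hasDerivAt_sumFun_of_bound hb hC hM hx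

lemma HasGeomBound.deriv_sumFun (hf : HasGeomBound f) :
    deriv (sumFun f) =ᶠ[𝓝 0] sumFun (d⁄dX ℝ f) :=
  hf.eventually_hasDerivAt.mono fun _ hx => hx.deriv

lemma _root_.AnalyticAt.exists_hasGeomBound {φ : ℝ → ℝ} (h : AnalyticAt ℝ φ 0) :
    ∃ f : ℝ⟦X⟧, HasGeomBound f ∧ φ =ᶠ[𝓝 0] sumFun f := by
  obtain ⟨p, hp⟩ := h
  obtain ⟨r, hr0, hr⟩ := ENNReal.lt_iff_exists_nnreal_btwn.1 hp.radius_pos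
  have hr0' : (0 : ℝ) < r := by exact_mod_cast hr0
  obtain ⟨C, hC, hpC⟩ := p.norm_mul_pow_le_of_lt_radius hr
  refine ⟨mk p.coeff, ⟨C, max (r : ℝ)⁻¹ 1, hC, le_max_right _ _, fun n => ?_⟩, ?_⟩
  · calc |coeff n (mk p.coeff)| = ‖p n‖ := by simp [p.norm_apply_eq_norm_coef]
      _ ≤ C * (r : ℝ)⁻¹ ^ n := by
          rw [inv_pow, ← div_eq_mul_inv, le_div_iff₀ (by positivity)]
          exact hpC n
      _ ≤ C * max (r : ℝ)⁻¹ 1 ^ n := by gcongr; exact le_max_left _ _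
  · filter_upwards [hasFPowerSeriesAt_iff.1 hp] with z hz
    rw [zero_add] at hz
    simp [sumFun, ← hz.tsum_eq, mul_comm]

noncomputable def sumGerm : convergent →+* Germ (𝓝 (0 : ℝ)) ℝ where
  toFun f := sumFun f
  map_one' := by simp [sumFun_one]
  map_mul' f g := Germ.coe_eq.2 <| by
    filter_upwards [(mem_convergent.1 f.2).eventually_summable_norm,
      (mem_convergent.1 g.2).eventually_summable_norm] with x hf hg
    exact sumFun_mul hf hg
  map_zero' := by simp [sumFun_zero]
  map_add' f g := Germ.coe_eq.2 <| by
    filter_upwards [(mem_convergent.1 f.2).eventually_summable_norm,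
      (mem_convergent.1 g.2).eventually_summable_norm] with x hf hg
    exact sumFun_add hf hg

lemma sumGerm_apply (f : convergent) : sumGerm f = (sumFun f : Germ (𝓝 (0 : ℝ)) ℝ) := rfl

end PowerSeries

open PowerSeries

noncomputable def invSuccSq (n : ℕ) : ℝ := ((n + 1 : ℝ) ^ 2)⁻¹

lemma invSuccSq_pos (n : ℕ) : 0 < invSuccSq n := by unfold invSuccSq; positivity

lemma invSuccSq_zero : invSuccSq 0 = 1 := by simp [invSuccSq]

lemma invSuccSq_le_one (n : ℕ) : invSuccSq n ≤ 1 :=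
  inv_le_one_of_one_le₀ (one_le_pow₀ (by simp))

lemma invSuccSq_le_four_mul {k n : ℕ} (h : n ≤ 2 * k + 1) : invSuccSq k ≤ 4 * invSuccSq n := by
  have h' : (n + 1 : ℝ) ≤ 2 * (k + 1) := by exact_mod_cast (by omega : n + 1 ≤ 2 * (k + 1))
  rw [invSuccSq, invSuccSq, ← div_eq_mul_inv, le_div_iff₀ (by positivity), ← div_eq_inv_mul,
    div_le_iff₀ (by positivity)]
  nlinarith

lemma sum_range_invSuccSq_le (n : ℕ) : ∑ i ∈ range n, invSuccSq i ≤ 2 := by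
  have h := sum_Ioo_inv_sq_le (α := ℝ) 0 (n + 1)
  rw [← Finset.Ico_add_one_left_eq_Ioo, ← sum_Ico_add' (fun i : ℕ => ((i : ℝ) ^ 2)⁻¹) 0 n 1,
    Nat.Ico_zero_eq_range] at h
  simpa [invSuccSq] using h

lemma invSuccSq_mul_invSuccSq_le (i j : ℕ) :
    invSuccSq i * invSuccSq j ≤ 4 * invSuccSq (i + j) * (invSuccSq i + invSuccSq j) := by
  have hi := invSuccSq_pos i
  have hj := invSuccSq_pos j
  rcases le_total i j with h | h
  · have := invSuccSq_le_four_mul (k := j) (n := i + j) (by omega)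
    nlinarith
  · have := invSuccSq_le_four_mul (k := i) (n := i + j) (by omega)
    nlinarith

lemma sum_antidiagonal_invSuccSq_mul_le (n : ℕ) :
    ∑ p ∈ antidiagonal n, invSuccSq p.1 * invSuccSq p.2 ≤ 16 * invSuccSq n := by
  have hsum : ∑ p ∈ antidiagonal n, invSuccSq p.1 ≤ 2 := by
    rw [Nat.sum_antidiagonal_eq_sum_range_succ_mk]
    exact sum_range_invSuccSq_le _
  have hsum' : ∑ p ∈ antidiagonal n, invSuccSq p.2 ≤ 2 := by
    rwa [← Nat.sum_antidiagonal_swap] at hsum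
  calc ∑ p ∈ antidiagonal n, invSuccSq p.1 * invSuccSq p.2
      ≤ ∑ p ∈ antidiagonal n, 4 * invSuccSq n * (invSuccSq p.1 + invSuccSq p.2) := by
        refine sum_le_sum fun p hp => ?_
        rw [← HasAntidiagonal.mem_antidiagonal.1 hp]
        exact invSuccSq_mul_invSuccSq_le _ _
    _ = 4 * invSuccSq n *
          (∑ p ∈ antidiagonal n, invSuccSq p.1 + ∑ p ∈ antidiagonal n, invSuccSq p.2) := by
        rw [← mul_sum, sum_add_distrib]
    _ ≤ 4 * invSuccSq n * (2 + 2) := by have := invSuccSq_pos n; gcongr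
    _ = 16 * invSuccSq n := by ring

def PowerSeries.CoeffMajorized (A M : ℝ) (n : ℕ) (p : ℝ⟦X⟧) : Prop :=
  ∀ i ≤ n, |coeff i p| ≤ A * M ^ i * invSuccSq i

namespace PowerSeries.CoeffMajorized

variable {A B M : ℝ} {n : ℕ} {p r : ℝ⟦X⟧}

lemma nonneg (hp : CoeffMajorized A M n p) : 0 ≤ A := by
  simpa [invSuccSq_zero] using (abs_nonneg _).trans (hp 0 (Nat.zero_le n))

lemma mul (hM : 0 ≤ M) (hp : CoeffMajorized A M n p) (hr : CoeffMajorized B M n r) :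
    CoeffMajorized (16 * A * B) M n (p * r) := by
  intro i hi
  have hA := hp.nonneg
  have hB := hr.nonneg
  calc |coeff i (p * r)| ≤ ∑ q ∈ antidiagonal i, |coeff q.1 p * coeff q.2 r| := by
        rw [coeff_mul]; exact abs_sum_le_sum_abs _ _
    _ ≤ ∑ q ∈ antidiagonal i, A * B * M ^ i * (invSuccSq q.1 * invSuccSq q.2) := by
        refine sum_le_sum fun q hq => ?_
        have hq' := HasAntidiagonal.mem_antidiagonal.1 hq
        rw [abs_mul, ← hq', pow_add]
        calc |coeff q.1 p| * |coeff q.2 r|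
            ≤ (A * M ^ q.1 * invSuccSq q.1) * (B * M ^ q.2 * invSuccSq q.2) :=
              mul_le_mul (hp _ (by omega)) (hr _ (by omega)) (abs_nonneg _)
                (by have := invSuccSq_pos q.1; positivity)
          _ = _ := by ring
    _ = A * B * M ^ i * ∑ q ∈ antidiagonal i, invSuccSq q.1 * invSuccSq q.2 := by rw [mul_sum]
    _ ≤ A * B * M ^ i * (16 * invSuccSq i) := by gcongr; exact sum_antidiagonal_invSuccSq_mul_le i
    _ = 16 * A * B * M ^ i * invSuccSq i := by ring

lemma of_derivative (hM : 4 ≤ M) (h0 : |coeff 0 p| ≤ 1)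
    (hd : CoeffMajorized 1 M n (d⁄dX ℝ p)) : CoeffMajorized 1 M (n + 1) p := by
  rintro (_ | i) hi
  · simpa [invSuccSq_zero] using h0
  have hdi := hd i (by omega)
  rw [coeff_derivative, abs_mul, one_mul] at hdi
  have hi1 : (1 : ℝ) ≤ |(i : ℝ) + 1| := by rw [abs_of_nonneg (by positivity)]; linarith
  calc |coeff (i + 1) p| ≤ |coeff (i + 1) p| * |(i : ℝ) + 1| :=
        le_mul_of_one_le_right (abs_nonneg _) hi1
    _ ≤ M ^ i * invSuccSq i := hdi
    _ ≤ M ^ i * (M * invSuccSq (i + 1)) := by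
        gcongr
        exact (invSuccSq_le_four_mul (n := i + 1) (by omega)).trans
          (by have := invSuccSq_pos (i + 1); gcongr)
    _ = 1 * M ^ (i + 1) * invSuccSq (i + 1) := by ring

end PowerSeries.CoeffMajorized

lemma exists_pow_mul_bound_of_step {q w : ℕ → ℝ} (hw : ∀ n, 0 < w n) (h0 : |q 0| ≤ w 0)
    {K : ℝ} {N : ℕ} (hstep : ∀ M, K ≤ M → ∀ m, N ≤ m →
      (∀ i ≤ m, |q i| ≤ M ^ i * w i) → |q (m + 1)| ≤ M ^ (m + 1) * w (m + 1)) :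
    ∃ M, 1 ≤ M ∧ ∀ n, |q n| ≤ M ^ n * w n := by
  set M := max (max K 1) (∑ i ∈ range N, |q (i + 1)| / w (i + 1))
  have hM1 : 1 ≤ M := (le_max_right _ _).trans (le_max_left _ _)
  refine ⟨M, hM1, fun n => ?_⟩
  induction n using Nat.strong_induction_on with
  | _ n ih =>
    rcases n with _ | m
    · simpa using h0
    rcases lt_or_ge m N with hm | hm
    · have hw' := hw (m + 1)
      calc |q (m + 1)| = |q (m + 1)| / w (m + 1) * w (m + 1) := by field_simp
        _ ≤ M * w (m + 1) := by
            gcongr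
            refine le_trans ?_ (le_max_right _ _)
            exact single_le_sum (f := fun i => |q (i + 1)| / w (i + 1))
              (fun i _ => by have := hw (i + 1); positivity) (mem_range.2 hm)
        _ ≤ M ^ (m + 1) * w (m + 1) := by gcongr; exact le_self_pow₀ hM1 (by omega)
    · exact hstep M ((le_max_left _ _).trans (le_max_left _ _)) m hm fun i hi => ih i (by omega)

namespace Gavrilov

noncomputable def odeLHS (ψ : ℝ → ℝ) (x : ℝ) : ℝ :=
  3 * x * deriv (deriv ψ) x + 6 * x * deriv ψ x ^ 3 - 4 * ψ x * deriv ψ x ^ 2 - 3 * deriv ψ x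

noncomputable def odeOp (f : ℝ⟦X⟧) : ℝ⟦X⟧ :=
  3 * X * d⁄dX ℝ (d⁄dX ℝ f) + 6 * X * d⁄dX ℝ f ^ 3 - 4 * f * d⁄dX ℝ f ^ 2 - 3 * d⁄dX ℝ f

lemma hasGeomBound_odeOp {f : ℝ⟦X⟧} (hf : HasGeomBound f) : HasGeomBound (odeOp f) := by
  have hX : X ∈ convergent := hasGeomBound_X
  have hd : d⁄dX ℝ f ∈ convergent := hf.derivative
  have hdd : d⁄dX ℝ (d⁄dX ℝ f) ∈ convergent := hf.derivative.derivative
  have hf : f ∈ convergent := hf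
  rw [← mem_convergent, odeOp]
  apply_rules [sub_mem, add_mem, pow_mem, mul_mem, ofNat_mem]

lemma odeLHS_sumFun {f : ℝ⟦X⟧} (hf : HasGeomBound f) :
    odeLHS (sumFun f) =ᶠ[𝓝 0] sumFun (odeOp f) := by
  let D (g : convergent) : convergent := ⟨d⁄dX ℝ g, (mem_convergent.1 g.2).derivative⟩
  let F : convergent := ⟨f, hf⟩
  let Xc : convergent := ⟨X, hasGeomBound_X⟩
  have hD (g : convergent) : sumGerm (D g) = (deriv (sumFun g) : Germ (𝓝 (0 : ℝ)) ℝ) :=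
    (Germ.coe_eq.2 (mem_convergent.1 g.2).deriv_sumFun).symm
  have hDD : sumGerm (D (D F)) = (deriv (deriv (sumFun f)) : Germ (𝓝 (0 : ℝ)) ℝ) := by
    rw [hD]
    exact (Germ.coe_eq.2 hf.deriv_sumFun.deriv).symm
  have hX : sumGerm Xc = (id : ℝ → ℝ) := by rw [sumGerm_apply, sumFun_X]
  rw [← Germ.coe_eq]
  change _ = sumGerm (3 * Xc * D (D F) + 6 * Xc * D F ^ 3 - 4 * F * D F ^ 2 - 3 * D F)
  simp only [map_sub, map_add, map_mul, map_pow, map_ofNat, hX, hDD, hD, sumGerm_apply]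
  rfl

lemma coeff_succ_odeOp_sub {f g : ℝ⟦X⟧} {m : ℕ} (h : ∀ i ≤ m + 1, coeff i f = coeff i g) :
    coeff (m + 1) (odeOp f) - coeff (m + 1) (odeOp g) =
      (3 * m - 8 * coeff 0 g * coeff 1 g) * (m + 2) * (coeff (m + 2) f - coeff (m + 2) g) := by
  obtain ⟨H, hH⟩ : X ^ (m + 2) ∣ f - g :=
    X_pow_dvd_iff.2 fun i hi => by rw [map_sub, h i (by omega), sub_self]
  rw [sub_eq_iff_eq_add'] at hH
  set P := d⁄dX ℝ g
  set K := (((m + 1 : ℕ) : ℝ⟦X⟧) + 1) * H + X * d⁄dX ℝ H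
  have hdf : d⁄dX ℝ f = P + X ^ (m + 1) * K := by rw [hH, derivative_add_X_pow_mul]
  have hddf : d⁄dX ℝ (d⁄dX ℝ f) =
      d⁄dX ℝ P + X ^ m * (((m : ℝ⟦X⟧) + 1) * K + X * d⁄dX ℝ K) := by
    rw [hdf, derivative_add_X_pow_mul]
  have hW : odeOp f - odeOp g = X ^ (m + 1) * (3 * (((m : ℝ⟦X⟧) + 1) * K + X * d⁄dX ℝ K)
      + 6 * X * K * (3 * P ^ 2 + 3 * P * X ^ (m + 1) * K + X ^ (2 * m + 2) * K ^ 2)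
      - 4 * (2 * g * P * K + g * X ^ (m + 1) * K ^ 2 + X * H * (P + X ^ (m + 1) * K) ^ 2)
      - 3 * K) := by
    rw [odeOp, odeOp, hddf, hdf, hH]
    ring
  have hHc : coeff (m + 2) f - coeff (m + 2) g = coeff 0 H := by
    rw [← map_sub, hH, add_sub_cancel_left, coeff_X_pow_mul', if_pos le_rfl, Nat.sub_self]
  rw [← map_sub, hW, coeff_X_pow_mul', if_pos le_rfl, Nat.sub_self, hHc]
  have hP0 : constantCoeff P = coeff 1 g := by
    rw [← coeff_zero_eq_constantCoeff_apply, coeff_derivative]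
    simp
  simp [K, hP0, map_ofNat]
  ring

/-- By `coeff_succ_odeOp_sub`, passing from the truncation to the full series adds
`3 (m + 2)² a_{m+2}` to the coefficient of `x^(m+1)` in `odeOp`, so this choice makes it vanish. -/
noncomputable def gavrilovCoeff : ℕ → ℝ
  | 0 => 1
  | 1 => -(3 / 4)
  | m + 2 => -coeff (m + 1) (odeOp (mk fun i => if i < m + 2 then gavrilovCoeff i else 0)) /
      (3 * (m + 2) ^ 2)

noncomputable def gavrilovSeries : ℝ⟦X⟧ := mk gavrilovCoeff

lemma coeff_zero_gavrilovSeries : coeff 0 gavrilovSeries = 1 := by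
  simp [gavrilovSeries, gavrilovCoeff]

lemma coeff_one_gavrilovSeries : coeff 1 gavrilovSeries = -(3 / 4) := by
  simp [gavrilovSeries, gavrilovCoeff]

lemma coeff_add_two_gavrilovSeries (m : ℕ) : coeff (m + 2) gavrilovSeries =
    -coeff (m + 1) (odeOp (trunc (m + 2) gavrilovSeries)) / (3 * (m + 2) ^ 2) := by
  rw [gavrilovSeries, coeff_mk, gavrilovCoeff]
  congr 4
  ext i
  simp [coeff_trunc]

lemma coeff_succ_odeOp_gavrilovSeries (m : ℕ) : coeff (m + 1) (odeOp gavrilovSeries) = 0 := by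
  have hT : ∀ i ≤ m + 1, coeff i gavrilovSeries = coeff i (trunc (m + 2) gavrilovSeries) :=
    fun i hi => by simp [coeff_trunc, show i < m + 2 by omega]
  have key := coeff_succ_odeOp_sub hT
  rw [← hT 0 (by omega), ← hT 1 (by omega), coeff_zero_gavrilovSeries, coeff_one_gavrilovSeries,
    Polynomial.coeff_coe, coeff_trunc, if_neg (lt_irrefl _), coeff_add_two_gavrilovSeries] at key
  have hm : (m + 2 : ℝ) ≠ 0 := by positivity
  rw [show ∀ B : ℝ, (3 * m - 8 * 1 * -(3 / 4)) * (m + 2) * (-B / (3 * (m + 2) ^ 2) - 0) = -B from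
    fun B => by field_simp; ring] at key
  linarith

lemma odeOp_gavrilovSeries : odeOp gavrilovSeries = 0 := by
  ext (_ | m)
  · have hd : constantCoeff (d⁄dX ℝ gavrilovSeries) = -(3 / 4) := by
      rw [← coeff_zero_eq_constantCoeff_apply, coeff_derivative, coeff_one_gavrilovSeries]
      simp
    have h0 : constantCoeff gavrilovSeries = 1 := by
      rw [← coeff_zero_eq_constantCoeff_apply, coeff_zero_gavrilovSeries]
    simp [odeOp, map_ofNat, hd, h0]
    norm_num
  · simpa using coeff_succ_odeOp_gavrilovSeries m

lemma eq_gavrilovSeries {f : ℝ⟦X⟧} (h0 : coeff 0 f = 1) (h1 : coeff 1 f = -(3 / 4))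
    (hf : odeOp f = 0) : f = gavrilovSeries := by
  ext n
  induction n using Nat.strong_induction_on with
  | _ n ih =>
    match n with
    | 0 => rw [h0, coeff_zero_gavrilovSeries]
    | 1 => rw [h1, coeff_one_gavrilovSeries]
    | m + 2 =>
      have key := coeff_succ_odeOp_sub (m := m) fun i hi => ih i (by omega)
      rw [hf, odeOp_gavrilovSeries, coeff_zero_gavrilovSeries, coeff_one_gavrilovSeries] at key
      have hm : (3 * m - 8 * 1 * -(3 / 4) : ℝ) * (m + 2) = 3 * (m + 2) ^ 2 := by ring
      have hm0 : (3 * (m + 2) ^ 2 : ℝ) ≠ 0 := by positivity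
      rw [hm] at key
      simpa [hm0, sub_eq_zero] using key.symm

lemma coeff_succ_odeOp_of_coeff_eq_zero {f : ℝ⟦X⟧} {m : ℕ} (hf : coeff (m + 2) f = 0) :
    coeff (m + 1) (odeOp f) =
      6 * coeff m (d⁄dX ℝ f ^ 3) - 4 * coeff (m + 1) (f * d⁄dX ℝ f ^ 2) := by
  have hd : coeff (m + 1) (d⁄dX ℝ f) = 0 := by rw [coeff_derivative, hf, zero_mul]
  simp [odeOp, mul_assoc, coeff_ofNat_mul, coeff_derivative (d⁄dX ℝ f), hd]

lemma abs_coeff_succ_odeOp_trunc_le {M : ℝ} (hM : 4 ≤ M) {m : ℕ}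
    (h : ∀ i ≤ m, |coeff i (d⁄dX ℝ gavrilovSeries)| ≤ M ^ i * invSuccSq i) :
    |coeff (m + 1) (odeOp (trunc (m + 2) gavrilovSeries))| ≤
      1536 * M ^ m * invSuccSq m + 1024 * M ^ (m + 1) * invSuccSq (m + 1) := by
  have hM0 : 0 ≤ M := by linarith
  set T : ℝ⟦X⟧ := ↑(trunc (m + 2) gavrilovSeries)
  have hT : ∀ i < m + 2, coeff i T = coeff i gavrilovSeries := fun i hi => by
    simp [T, coeff_trunc, hi]
  have hT2 : coeff (m + 2) T = 0 := by simp [T, coeff_trunc]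
  have hP : CoeffMajorized 1 M (m + 1) (d⁄dX ℝ T) := by
    intro i hi
    rcases hi.lt_or_eq with hi | rfl
    · rw [coeff_derivative, hT _ (by omega), ← coeff_derivative, one_mul]
      exact h i (by omega)
    · rw [coeff_derivative, hT2, zero_mul, abs_zero]
      have := invSuccSq_pos (m + 1)
      positivity
  have hT1 : CoeffMajorized 1 M (m + 1) T :=
    .of_derivative hM (by rw [hT 0 (by omega), coeff_zero_gavrilovSeries, abs_one])
      fun i hi => hP i (by omega)
  have hP3 := (hP.mul hM0 hP).mul hM0 hP
  have hTP2 := (hT1.mul hM0 hP).mul hM0 hP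
  rw [coeff_succ_odeOp_of_coeff_eq_zero hT2, pow_three', sq, ← mul_assoc]
  have ha := hP3 m (by omega)
  have hb := hTP2 (m + 1) le_rfl
  rw [abs_le] at ha hb ⊢
  constructor <;> linarith

lemma abs_coeff_derivative_gavrilovSeries_succ_le {M : ℝ} (hM : 6144 ≤ M) {m : ℕ}
    (hm : 340 ≤ m) (h : ∀ i ≤ m, |coeff i (d⁄dX ℝ gavrilovSeries)| ≤ M ^ i * invSuccSq i) :
    |coeff (m + 1) (d⁄dX ℝ gavrilovSeries)| ≤ M ^ (m + 1) * invSuccSq (m + 1) := by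
  -- `6144 = 4 · 1536` lets `M` absorb the first term of `hL`;
  -- `m ≥ 340` gives `3 (m + 2) ≥ 1 + 1024`.
  have hL := abs_coeff_succ_odeOp_trunc_le (by linarith) h
  have hrec : 3 * (m + 2) * |coeff (m + 1) (d⁄dX ℝ gavrilovSeries)| =
      |coeff (m + 1) (odeOp (trunc (m + 2) gavrilovSeries))| := by
    rw [coeff_derivative, coeff_add_two_gavrilovSeries, abs_mul, abs_div, abs_neg,
      abs_of_pos (by positivity : (0 : ℝ) < 3 * (m + 2) ^ 2),
      abs_of_pos (by positivity : (0 : ℝ) < (m + 1 : ℕ) + 1)]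
    push_cast
    field_simp
    ring
  have hw : 1536 * M ^ m * invSuccSq m ≤ M ^ (m + 1) * invSuccSq (m + 1) := by
    have := invSuccSq_le_four_mul (k := m) (n := m + 1) (by omega)
    have := invSuccSq_pos (m + 1)
    calc 1536 * M ^ m * invSuccSq m ≤ 1536 * M ^ m * (4 * invSuccSq (m + 1)) := by gcongr
      _ = M ^ m * 6144 * invSuccSq (m + 1) := by ring
      _ ≤ M ^ m * M * invSuccSq (m + 1) := by gcongr
      _ = M ^ (m + 1) * invSuccSq (m + 1) := by ring
  have hm' : (1025 : ℝ) ≤ 3 * (m + 2) := by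
    have : (340 : ℝ) ≤ m := by exact_mod_cast hm
    linarith
  have hpos : 0 ≤ M ^ (m + 1) * invSuccSq (m + 1) := by
    have := invSuccSq_pos (m + 1)
    positivity
  have hfinal : 3 * (m + 2) * |coeff (m + 1) (d⁄dX ℝ gavrilovSeries)| ≤
      3 * (m + 2) * (M ^ (m + 1) * invSuccSq (m + 1)) := by
    rw [hrec]
    nlinarith
  exact le_of_mul_le_mul_left hfinal (by positivity)

lemma hasGeomBound_gavrilovSeries : HasGeomBound gavrilovSeries := by
  have h0 : |coeff 0 (d⁄dX ℝ gavrilovSeries)| ≤ invSuccSq 0 := by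
    rw [coeff_derivative, coeff_one_gavrilovSeries, invSuccSq_zero]
    norm_num
  obtain ⟨M, hM1, hM⟩ := exists_pow_mul_bound_of_step invSuccSq_pos h0
    fun M hM m hm h => abs_coeff_derivative_gavrilovSeries_succ_le hM hm h
  refine HasGeomBound.of_derivative ⟨1, M, one_pos, hM1, fun n => ?_⟩
  calc |coeff n (d⁄dX ℝ gavrilovSeries)| ≤ M ^ n * invSuccSq n := hM n
    _ ≤ 1 * M ^ n := by
        rw [one_mul]
        exact mul_le_of_le_one_right (by positivity) (invSuccSq_le_one n)

lemma _root_.GavrilovODE.congr {φ ψ : ℝ → ℝ} (h : GavrilovODE φ) (hφψ : φ =ᶠ[𝓝 0] ψ) :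
    GavrilovODE ψ := by
  obtain ⟨han, h0, h1, hode⟩ := h
  have hd := hφψ.deriv
  refine ⟨han.congr hφψ, hφψ.eq_of_nhds ▸ h0, hd.eq_of_nhds ▸ h1, ?_⟩
  filter_upwards [hode, hφψ, hd, hd.deriv] with x hx e0 e1 e2
  rwa [← e0, ← e1, ← e2]

lemma gavrilovODE_sumFun_iff {f : ℝ⟦X⟧} (hf : HasGeomBound f) :
    GavrilovODE (sumFun f) ↔ coeff 0 f = 1 ∧ coeff 1 f = -(3 / 4) ∧ odeOp f = 0 := by
  have hd0 : deriv (sumFun f) 0 = coeff 1 f := by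
    rw [hf.deriv_sumFun.eq_of_nhds, sumFun_apply_zero, coeff_derivative]
    simp
  have hode : (∀ᶠ x in 𝓝 0, odeLHS (sumFun f) x = 0) ↔ odeOp f = 0 := by
    refine ⟨fun h => eq_zero_of_sumFun_eventuallyEq_zero (hasGeomBound_odeOp hf)
      ((odeLHS_sumFun hf).symm.trans h), fun h => ?_⟩
    filter_upwards [odeLHS_sumFun hf] with x hx
    rw [hx, h, sumFun_zero, Pi.zero_apply]
  change AnalyticAt ℝ (sumFun f) 0 ∧ sumFun f 0 = 1 ∧ deriv (sumFun f) 0 = -(3 / 4) ∧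
    (∀ᶠ x in 𝓝 0, odeLHS (sumFun f) x = 0) ↔ _
  rw [sumFun_apply_zero, hd0, hode]
  exact and_iff_right (hasFPowerSeriesAt_sumFun hf).analyticAt

end Gavrilov

open Gavrilov

/-- Lemma 1: the singular Cauchy problem has a unique analytic solution near `0`. -/
theorem gavrilov_ode_exists_unique :
    ∃ ψ : ℝ → ℝ, GavrilovODE ψ ∧
      ∀ φ : ℝ → ℝ, GavrilovODE φ → φ =ᶠ[nhds (0:ℝ)] ψ := by
  refine ⟨sumFun gavrilovSeries, (gavrilovODE_sumFun_iff hasGeomBound_gavrilovSeries).2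
    ⟨coeff_zero_gavrilovSeries, coeff_one_gavrilovSeries, odeOp_gavrilovSeries⟩, fun φ hφ => ?_⟩
  obtain ⟨f, hf, hφf⟩ := hφ.1.exists_hasGeomBound
  obtain ⟨h0, h1, hode⟩ := (gavrilovODE_sumFun_iff hf).1 (hφ.congr hφf)
  rwa [eq_gavrilovSeries h0 h1 hode] at hφf
end

section
/- The substitution t = x·ψ(x)^{-2}, v = ψ(x)·ψ'(x) transforms the equation 3x·ψ'' + 6x·(ψ')³ − 4ψ·(ψ')² − 3ψ' = 0 into the first-order equation t·dv/dt = v·((4/3)v + 1) + t·v²·(2v+9)/(3(1 − 2tv)). -/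
/-! With `t = x/ψ²` and `v = ψψ'` one has `t' = (1 - 2tv)/ψ²` and `v' = ψ'² + ψψ''`, so
`t dv/dt = x (ψ'² + ψψ'')/(1 - 2tv)`; eliminating `ψ''` with the equation leaves an identity
between rational functions of `x`, `ψ`, `ψ'`. -/

theorem HasDerivAt.id_div_sq {ψ : ℝ → ℝ} {ψ' x : ℝ} (hψ : HasDerivAt ψ ψ' x)
    (hψx : ψ x ≠ 0) :
    HasDerivAt (fun y => y / ψ y ^ 2)
      ((1 - 2 * (x / ψ x ^ 2) * (ψ x * ψ')) / ψ x ^ 2) x := by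
  refine ((hasDerivAt_id' x).fun_div (hψ.fun_pow 2) (pow_ne_zero 2 hψx)).congr_deriv ?_
  field_simp
  ring

theorem transformed_ode_of_values {x ψ ψ' ψ'' t v : ℝ} (hψ : ψ ≠ 0)
    (hode : 3 * x * ψ'' + 6 * x * ψ' ^ 3 - 4 * ψ * ψ' ^ 2 - 3 * ψ' = 0)
    (ht : t = x / ψ ^ 2) (hv : v = ψ * ψ') (hden : 1 - 2 * t * v ≠ 0) :
    t * ((ψ' ^ 2 + ψ * ψ'') / ((1 - 2 * t * v) / ψ ^ 2)) =
      v * ((4/3) * v + 1) + t * v ^ 2 * (2 * v + 9) / (3 * (1 - 2 * t * v)) := by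
  have hsub : 1 - 2 * t * v = (ψ - x * ψ' * 2) / ψ := by subst ht hv; field_simp
  have hd : ψ - x * ψ' * 2 ≠ 0 := fun h => hden (by rw [hsub, h, zero_div])
  rw [hsub]
  subst ht hv
  field_simp
  linear_combination ψ * hode

theorem gavrilov_substitution_general (ψ : ℝ → ℝ) (hψ : ContDiff ℝ 2 ψ)
    (hpos : ∀ y, ψ y > 0) (x : ℝ)
    (hode : 3 * x * deriv (deriv ψ) x + 6 * x * (deriv ψ x)^3
      - 4 * ψ x * (deriv ψ x)^2 - 3 * deriv ψ x = 0)
    (t : ℝ → ℝ) (ht : ∀ y, t y = y / (ψ y)^2)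
    (v : ℝ → ℝ) (hv : ∀ y, v y = ψ y * deriv ψ y)
    (hden : 1 - 2 * t x * v x ≠ 0) :
    t x * (deriv v x / deriv t x) =
      v x * ((4/3) * v x + 1)
        + t x * (v x)^2 * (2 * v x + 9) / (3 * (1 - 2 * t x * v x)) := by
  have hψx := (hψ.differentiable two_ne_zero x).hasDerivAt
  have hψ'x := (hψ.differentiable_deriv_two x).hasDerivAt
  have htd : HasDerivAt t ((1 - 2 * t x * v x) / ψ x ^ 2) x := by
    rw [ht x, hv x, funext ht]
    exact hψx.id_div_sq (hpos x).ne'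
  have hvd : HasDerivAt v (deriv ψ x ^ 2 + ψ x * deriv (deriv ψ) x) x := by
    rw [funext hv, sq]
    exact hψx.fun_mul hψ'x
  rw [htd.deriv, hvd.deriv]
  exact transformed_ode_of_values (hpos x).ne' hode (ht x) (hv x) hden

/-- The substitution `t = x ψ(x)⁻²`, `v = ψ(x) ψ'(x)` turns the second order equation
`3x ψ'' + 6x (ψ')³ − 4ψ (ψ')² − 3ψ' = 0` into the first order equation
`t dv/dt = v((4/3)v + 1) + t v² (2v+9) / (3(1 − 2tv))`, where `dv/dt = v'(x)/t'(x)`. -/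
theorem gavrilov_substitution (ψ : ℝ → ℝ) (hψ : ContDiff ℝ 2 ψ)
    (hpos : ∀ y, ψ y > 0) (x : ℝ)
    (hode : 3 * x * deriv (deriv ψ) x + 6 * x * (deriv ψ x)^3
      - 4 * ψ x * (deriv ψ x)^2 - 3 * deriv ψ x = 0)
    (t : ℝ → ℝ) (ht : ∀ y, t y = y / (ψ y)^2)
    (v : ℝ → ℝ) (hv : ∀ y, v y = ψ y * deriv ψ y)
    (ht' : deriv t x ≠ 0) (hden : 1 - 2 * t x * v x ≠ 0) :
    t x * (deriv v x / deriv t x) =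
      v x * ((4/3) * v x + 1)
        + t x * (v x)^2 * (2 * v x + 9) / (3 * (1 - 2 * t x * v x)) :=
  gavrilov_substitution_general ψ hψ hpos x hode t ht v hv hden
end

section
/- Define F(x,α) = −2x·ψ(α) + 2x³, H(α) = 6α·(1/ψ'(α) + 2ψ(α)), and G(x,α) = 12x²α − F(x,α)² − H(α), where ψ solves 3x·ψ'' + 6x·(ψ')³ − 4ψ·(ψ')² − 3ψ' = 0 with ψ(0)=1, ψ'(0)=−3/4. Then at (x,α) = (1,0): F = 0, G = 0, ∂F/∂x = 4, ∂F/∂α = 3/2, ∂G/∂x = 0, and ∂G/∂α = 8. -/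
theorem hasDerivAt_sub_smul_of_continuousAt {𝕜 E : Type*} [NontriviallyNormedField 𝕜]
    [NormedAddCommGroup E] [NormedSpace 𝕜 E] {g : 𝕜 → E} {a : 𝕜} (hg : ContinuousAt g a) :
    HasDerivAt (fun x => (x - a) • g x) (g a) a := by
  rw [hasDerivAt_iff_tendsto_slope]
  refine (hg.tendsto.mono_left nhdsWithin_le_nhds).congr' ?_
  filter_upwards [self_mem_nhdsWithin] with x hx
  rw [slope_def_module, sub_self, zero_smul, sub_zero, smul_smul,
    inv_mul_cancel₀ (sub_ne_zero.mpr hx), one_smul]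

theorem hasDerivAt_gavrilovH {ψ : ℝ → ℝ} (hψ : AnalyticAt ℝ ψ 0) (hψ' : deriv ψ 0 ≠ 0) :
    HasDerivAt (fun α => 6 * α * (1 / deriv ψ α + 2 * ψ α))
      (6 * (1 / deriv ψ 0 + 2 * ψ 0)) 0 := by
  have hcont : ContinuousAt (fun α => 1 / deriv ψ α + 2 * ψ α) 0 :=
    (continuousAt_const.div hψ.deriv.continuousAt hψ').add
      (continuousAt_const.mul hψ.continuousAt)
  simpa only [sub_zero, smul_eq_mul, mul_assoc] using
    (hasDerivAt_sub_smul_of_continuousAt hcont).const_mul 6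

/-- Values of `F`, `G` and of their partial derivatives at `(x,α) = (1,0)`. -/
theorem gavrilov_FG_values (ψ : ℝ → ℝ) (h : GavrilovODE ψ)
    (F : ℝ → ℝ → ℝ) (hF : ∀ x α, F x α = -2*x*ψ α + 2*x^3)
    (H : ℝ → ℝ) (hH : ∀ α, H α = 6*α*(1/deriv ψ α + 2*ψ α))
    (G : ℝ → ℝ → ℝ) (hG : ∀ x α, G x α = 12*x^2*α - (F x α)^2 - H α) :
    F 1 0 = 0 ∧ G 1 0 = 0 ∧
    deriv (fun x => F x 0) 1 = 4 ∧
    deriv (fun α => F 1 α) 0 = 3/2 ∧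
    deriv (fun x => G x 0) 1 = 0 ∧
    deriv (fun α => G 1 α) 0 = 8 := by
  obtain ⟨hψ, hψ0, hψ'0, -⟩ := h
  have hF10 : F 1 0 = 0 := by rw [hF, hψ0]; ring
  have hH0 : H 0 = 0 := by rw [hH]; ring
  have hFx : HasDerivAt (fun x => F x 0) 4 1 := by
    rw [show (fun x => F x 0) = fun x => 2 * x ^ 3 - 2 * x from
      funext fun x => by rw [hF, hψ0]; ring]
    exact (((hasDerivAt_pow 3 1).const_mul 2).sub ((hasDerivAt_id' 1).const_mul 2)).congr_deriv
      (by norm_num)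
  have hFα : HasDerivAt (fun α => F 1 α) (3/2) 0 := by
    rw [show (fun α => F 1 α) = fun α => -2 * ψ α + 2 from funext fun α => by rw [hF]; ring]
    exact (hψ.differentiableAt.hasDerivAt.const_mul (-2)).add_const 2 |>.congr_deriv
      (by rw [hψ'0]; norm_num)
  have hH' : HasDerivAt H 4 0 := by
    rw [funext hH]
    exact (hasDerivAt_gavrilovH hψ (by rw [hψ'0]; norm_num)).congr_deriv
      (by rw [hψ'0, hψ0]; norm_num)
  have hGx : HasDerivAt (fun x => G x 0) 0 1 := by
    rw [show (fun x => G x 0) = fun x => -F x 0 ^ 2 - H 0 from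
      funext fun x => by rw [hG]; ring]
    exact ((hFx.pow 2).neg.sub_const (H 0)).congr_deriv (by rw [hF10]; norm_num)
  have hGα : HasDerivAt (fun α => G 1 α) 8 0 := by
    rw [show (fun α => G 1 α) = fun α => 12 * α - F 1 α ^ 2 - H α from
      funext fun α => by rw [hG]; ring]
    exact (((hasDerivAt_id' 0).const_mul 12).sub (hFα.pow 2)).sub hH' |>.congr_deriv
      (by rw [hF10]; norm_num)
  exact ⟨hF10, by rw [hG, hF10, hH0]; ring, hFx.deriv, hFα.deriv, hGx.deriv, hGα.deriv⟩
end

section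
/- The function H(α) = 6α·(1/ψ'(α) + 2ψ(α)) satisfies H'(α) = 24α·ψ'(α) + 4ψ(α), where ψ solves 3x·ψ'' + 6x·(ψ')³ − 4ψ·(ψ')² − 3ψ' = 0 with ψ(0)=1, ψ'(0)=−3/4. -/
/-! Differentiating `H` and clearing the denominator `ψ'²`, the difference between `H'` and
`24αψ' + 4ψ` is `−2` times the left side of the ODE. Near `0` everything is differentiable since
`ψ` and `ψ'` are analytic there, and `ψ'` does not vanish since `ψ'(0) = −3/4`. -/

open Filter Topology

theorem hasDerivAt_mul_inv_add_two_mul {p q : ℝ → ℝ} {q' x : ℝ}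
    (hp : HasDerivAt p (q x) x) (hq : HasDerivAt q q' x) (hqx : q x ≠ 0) :
    HasDerivAt (fun a => 6 * a * (1 / q a + 2 * p a))
      (6 * (1 / q x + 2 * p x) + 6 * x * (-q' / q x ^ 2 + 2 * q x)) x := by
  simp only [one_div]
  simpa using ((hasDerivAt_id x).const_mul 6).fun_mul ((hq.fun_inv hqx).fun_add (hp.const_mul 2))

theorem eq_of_gavrilov_ode {p q q' x : ℝ} (hq : q ≠ 0)
    (hode : 3 * x * q' + 6 * x * q ^ 3 - 4 * p * q ^ 2 - 3 * q = 0) :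
    6 * (1 / q + 2 * p) + 6 * x * (-q' / q ^ 2 + 2 * q) = 24 * x * q + 4 * p := by
  field_simp
  linear_combination (-2) * hode

theorem AnalyticAt.eventually_analyticAt_deriv {f : ℝ → ℝ} {x : ℝ} (hf : AnalyticAt ℝ f x) :
    ∀ᶠ y in 𝓝 x, AnalyticAt ℝ f y ∧ AnalyticAt ℝ (deriv f) y := by
  filter_upwards [hf.eventually_analyticAt] with y hy using ⟨hy, hy.deriv⟩

/-- `H(α) = 6α(1/ψ'(α) + 2ψ(α))` satisfies `H'(α) = 24α ψ'(α) + 4ψ(α)` near `0`. -/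
theorem gavrilov_H_deriv (ψ : ℝ → ℝ) (h : GavrilovODE ψ)
    (H : ℝ → ℝ) (hH : ∀ α, H α = 6*α*(1/deriv ψ α + 2*ψ α)) :
    ∀ᶠ α in nhds (0:ℝ), deriv H α = 24*α*deriv ψ α + 4*ψ α := by
  obtain ⟨hψ, -, hψ'0, hode⟩ := h
  have hψ'_ne : ∀ᶠ x in 𝓝 (0:ℝ), deriv ψ x ≠ 0 :=
    hψ.deriv.continuousAt.eventually_ne (by rw [hψ'0]; norm_num)
  have hH_eq : H = fun α => 6*α*(1/deriv ψ α + 2*ψ α) := funext hH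
  filter_upwards [hψ.eventually_analyticAt_deriv, hψ'_ne, hode] with x ⟨hψx, hψ'x⟩ hne hodex
  rw [hH_eq, (hasDerivAt_mul_inv_add_two_mul hψx.differentiableAt.hasDerivAt
    hψ'x.differentiableAt.hasDerivAt hne).deriv]
  exact eq_of_gavrilov_ode hne hodex
end

section
/- The function α(x,y) of Lemma 3 satisfies α(x,y) = α(x,−y) on its domain, and consequently G(x, α(x,0)) = 0 for all x near 1. -/
/-- `α` is an analytic solution near `(1,0)` of the system
`∂α/∂x = F(x,α)`, `(∂α/∂y)² = G(x,α)` with `α(1,0) = 0` and `∂α/∂y` not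
identically zero. -/
def SolvesSystem (F G : ℝ → ℝ → ℝ) (α : ℝ → ℝ → ℝ) : Prop :=
  AnalyticAt ℝ (fun q : ℝ × ℝ => α q.1 q.2) (1, 0) ∧
  α 1 0 = 0 ∧
  (¬ ∀ᶠ q : ℝ × ℝ in nhds (1, 0), deriv (α q.1) q.2 = 0) ∧
  ∀ᶠ q : ℝ × ℝ in nhds (1, 0),
    deriv (fun x => α x q.2) q.1 = F q.1 (α q.1 q.2) ∧
    (deriv (α q.1) q.2)^2 = G q.1 (α q.1 q.2)

/-!
Put `w(x) = G(x, α(x,0))`. Along the characteristic `y = 0` we have `∂α/∂x = F`, and the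
equation for `ψ` turns the chain rule into the linear equation `w' = -4xψ'(α) w`; since
`w(1) = 12·0 - (2 - 2ψ(0))² - 0 = 0`, uniqueness gives `w ≡ 0`.

For fixed `x`, `g = α(x,·)` satisfies `g'² = Φ(g)` with `Φ = G(x,·)` and `g'(0)² = w(x) = 0`.
Either `g' ≡ 0` near `0`, or the zeros of `g'` are isolated and differentiating gives
`g'' = Φ'(g)/2`. In both cases `g` solves an autonomous Newton equation with `g'(0) = 0`, and
`y ↦ g(-y)` solves the same Cauchy problem, so `g` is even near `0`. By the identity theorem
on the slices of the analytic function `α`, these germs of evenness fill a whole neighbourhood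
of `(1,0)`.
-/

open Filter Topology Set Metric

theorem eventuallyEq_zero_of_hasDerivAt_mul_self {c w : ℝ → ℝ} {t₀ : ℝ}
    (hc : ContinuousAt c t₀) (hw : ∀ᶠ t in 𝓝 t₀, HasDerivAt w (c t * w t) t) (h₀ : w t₀ = 0) :
    w =ᶠ[𝓝 t₀] 0 := by
  have hbound : ∀ᶠ t in 𝓝 t₀, ‖c t‖₊ < ‖c t₀‖₊ + 1 :=
    hc.nnnorm.eventually_lt continuousAt_const (lt_add_one _)
  refine ODE_solution_unique_of_eventually (K := ‖c t₀‖₊ + 1) (v := fun t y => c t * y)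
    (s := fun _ => univ) ?_ (hw.mono fun t ht => ⟨ht, trivial⟩)
    (.of_forall fun t => ⟨by simp, trivial⟩) h₀
  filter_upwards [hbound] with t ht
  exact ((lipschitzWith_smul (c t)).weaken ht.le).lipschitzOnWith

theorem eventually_even_of_hasDerivAt_deriv_eq_comp {g h : ℝ → ℝ} (hh : ContDiffAt ℝ 1 h (g 0))
    (hg : ∀ᶠ y in 𝓝 0, HasDerivAt g (deriv g y) y ∧ HasDerivAt (deriv g) (h (g y)) y)
    (h₀ : deriv g 0 = 0) : ∀ᶠ y in 𝓝 0, g (-y) = g y := by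
  obtain ⟨K, t, ht, hK⟩ := hh.exists_lipschitzOnWith
  have hfst : LipschitzOnWith K (fun p : ℝ × ℝ => h p.1) (t ×ˢ univ) := by
    have := hK.comp LipschitzWith.prod_fst.lipschitzOnWith
      (mapsTo_fst_prod : MapsTo Prod.fst (t ×ˢ (univ : Set ℝ)) t)
    rwa [mul_one] at this
  have hv : LipschitzOnWith (max 1 K) (fun p : ℝ × ℝ => (p.2, h p.1)) (t ×ˢ univ) :=
    LipschitzWith.prod_snd.lipschitzOnWith.prodMk hfst
  have hgt : ∀ᶠ y in 𝓝 0, g y ∈ t := hg.self_of_nhds.1.continuousAt.tendsto ht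
  have hneg : Tendsto (fun y : ℝ => -y) (𝓝 0) (𝓝 0) := by simpa using tendsto_neg (0 : ℝ)
  -- `(g, g')` and its time reversal `y ↦ (g (-y), -g' (-y))` solve `p' = (p.2, h p.1)`.
  have hsol := ODE_solution_unique_of_eventually (t₀ := 0) (K := max 1 K)
    (v := fun _ p => (p.2, h p.1)) (s := fun _ => t ×ˢ univ)
    (f := fun y => (g (-y), -deriv g (-y))) (g := fun y => (g y, deriv g y))
    (.of_forall fun _ => hv) ?_ ?_ (by simp [h₀])
  · filter_upwards [hsol] with y hy
    exact congrArg Prod.fst hy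
  · filter_upwards [hneg.eventually hg, hneg.eventually hgt] with y ⟨hg₁, hg₂⟩ hyt
    have h₁ := hg₁.comp y (hasDerivAt_neg y)
    have h₂ := (hg₂.comp y (hasDerivAt_neg y)).neg
    simp only [mul_neg_one, neg_neg] at h₁ h₂
    exact ⟨h₁.prodMk h₂, hyt, trivial⟩
  · filter_upwards [hg, hgt] with y ⟨hg₁, hg₂⟩ hyt
    exact ⟨hg₁.prodMk hg₂, hyt, trivial⟩

theorem eventually_hasDerivAt_deriv_of_sq_deriv_eq {g Φ : ℝ → ℝ} {y₀ : ℝ}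
    (hg : AnalyticAt ℝ g y₀) (hΦ : ContDiffAt ℝ 2 Φ (g y₀))
    (hsq : ∀ᶠ y in 𝓝 y₀, deriv g y ^ 2 = Φ (g y)) (hne : ∀ᶠ y in 𝓝[≠] y₀, deriv g y ≠ 0) :
    ∀ᶠ y in 𝓝 y₀, HasDerivAt (deriv g) (deriv Φ (g y) / 2) y := by
  have hgan : ∀ᶠ y in 𝓝 y₀, AnalyticAt ℝ g y := hg.eventually_analyticAt
  have hΦd : ∀ᶠ y in 𝓝 y₀, DifferentiableAt ℝ Φ (g y) :=
    hg.continuousAt.eventually <| (hΦ.eventually (by simp)).mono fun _ h =>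
      h.differentiableAt (by norm_num)
  have hprod : ∀ᶠ y in 𝓝 y₀,
      2 * deriv g y * deriv (deriv g) y = deriv Φ (g y) * deriv g y := by
    filter_upwards [hsq.eventually_nhds, hΦd, hgan] with y hy hΦy hgy
    have hl : HasDerivAt (fun z => deriv g z ^ 2) (2 * deriv g y * deriv (deriv g) y) y := by
      simpa using hgy.deriv.differentiableAt.hasDerivAt.fun_pow 2
    exact hl.unique <|
      (hΦy.hasDerivAt.comp y hgy.differentiableAt.hasDerivAt).congr_of_eventuallyEq hy
  have hcont : ContinuousAt (fun y => deriv Φ (g y) / 2) y₀ :=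
    ((hΦ.derivWithin (m := 1) (by norm_num)).continuousAt.comp hg.continuousAt).div_const 2
  have heq : deriv (deriv g) =ᶠ[𝓝 y₀] fun y => deriv Φ (g y) / 2 := by
    refine (hg.deriv.deriv.continuousAt.eventuallyEq_nhds_iff_eventuallyEq_nhdsNE hcont).mp ?_
    filter_upwards [nhdsWithin_le_nhds hprod, hne] with y hy hy₀
    apply mul_left_cancel₀ (mul_ne_zero two_ne_zero hy₀)
    linear_combination hy
  filter_upwards [heq, hgan] with y hy hgy
  exact hy ▸ hgy.deriv.differentiableAt.hasDerivAt

theorem AnalyticAt.eventually_even_of_sq_deriv_eq {g Φ : ℝ → ℝ} (hg : AnalyticAt ℝ g 0)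
    (hΦ : ContDiffAt ℝ 2 Φ (g 0)) (hsq : ∀ᶠ y in 𝓝 0, deriv g y ^ 2 = Φ (g y))
    (h₀ : Φ (g 0) = 0) : ∀ᶠ y in 𝓝 0, g (-y) = g y := by
  have hd₀ : deriv g 0 = 0 := pow_eq_zero_iff two_ne_zero |>.mp (hsq.self_of_nhds.trans h₀)
  have hgd : ∀ᶠ y in 𝓝 0, HasDerivAt g (deriv g y) y :=
    hg.eventually_analyticAt.mono fun _ h => h.differentiableAt.hasDerivAt
  rcases hg.deriv.eventually_eq_zero_or_eventually_ne_zero with hzero | hne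
  · refine eventually_even_of_hasDerivAt_deriv_eq_comp (h := fun _ => 0) contDiffAt_const ?_ hd₀
    filter_upwards [hgd, hzero.eventually_nhds] with y hy hzy
    exact ⟨hy, (hasDerivAt_const y 0).congr_of_eventuallyEq hzy⟩
  · refine eventually_even_of_hasDerivAt_deriv_eq_comp (h := fun a => deriv Φ a / 2)
      ((hΦ.derivWithin (m := 1) (by norm_num)).div_const 2) ?_ hd₀
    filter_upwards [hgd, eventually_hasDerivAt_deriv_of_sq_deriv_eq hg hΦ hsq hne] with y h₁ h₂
    exact ⟨h₁, h₂⟩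

theorem AnalyticAt.eventuallyEq_of_eventually_eventuallyEq_slice {E F G : Type*}
    [NormedAddCommGroup E] [NormedSpace ℝ E] [NormedAddCommGroup F] [NormedSpace ℝ F]
    [NormedAddCommGroup G] [NormedSpace ℝ G] [CompleteSpace G] {f₁ f₂ : E × F → G} {p : E × F}
    (h₁ : AnalyticAt ℝ f₁ p) (h₂ : AnalyticAt ℝ f₂ p)
    (h : ∀ᶠ x in 𝓝 p.1, (fun y => f₁ (x, y)) =ᶠ[𝓝 p.2] fun y => f₂ (x, y)) :
    f₁ =ᶠ[𝓝 p] f₂ := by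
  obtain ⟨ε, hε, hball⟩ :=
    eventually_nhds_iff_ball.mp (h₁.eventually_analyticAt.and h₂.eventually_analyticAt)
  have hslice : ∀ {f : E × F → G}, (∀ q ∈ ball p ε, AnalyticAt ℝ f q) →
      ∀ x ∈ ball p.1 ε, AnalyticOnNhd ℝ (fun y => f (x, y)) (ball p.2 ε) := by
    intro f hf x hx y hy
    have hxy : (x, y) ∈ ball p ε := by rw [← ball_prod_same]; exact ⟨hx, hy⟩
    exact (hf _ hxy).comp₂ analyticAt_const analyticAt_id
  filter_upwards [prod_mem_nhds (inter_mem h (ball_mem_nhds p.1 hε)) (ball_mem_nhds p.2 hε)]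
    with q ⟨⟨hq, hx⟩, hy⟩
  exact (hslice (fun q hq => (hball q hq).1) q.1 hx).eqOn_of_preconnected_of_eventuallyEq
    (hslice (fun q hq => (hball q hq).2) q.1 hx) (convex_ball _ _).isPreconnected
    (mem_ball_self hε) hq hy

noncomputable def gavrilovF (ψ : ℝ → ℝ) (x a : ℝ) : ℝ :=
  -2 * x * ψ a + 2 * x ^ 3

noncomputable def gavrilovH (ψ : ℝ → ℝ) (a : ℝ) : ℝ :=
  6 * a * (1 / deriv ψ a + 2 * ψ a)

noncomputable def gavrilovG (ψ : ℝ → ℝ) (x a : ℝ) : ℝ :=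
  12 * x ^ 2 * a - gavrilovF ψ x a ^ 2 - gavrilovH ψ a

structure GavrilovRegularAt (ψ : ℝ → ℝ) (a : ℝ) : Prop where
  analyticAt : AnalyticAt ℝ ψ a
  deriv_ne_zero : deriv ψ a ≠ 0
  ode : 3 * a * deriv (deriv ψ) a + 6 * a * deriv ψ a ^ 3 - 4 * ψ a * deriv ψ a ^ 2
    - 3 * deriv ψ a = 0

theorem GavrilovODE.eventually_regularAt {ψ : ℝ → ℝ} (h : GavrilovODE ψ) :
    ∀ᶠ a in 𝓝 0, GavrilovRegularAt ψ a := by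
  obtain ⟨hψ, -, hψ'₀, hode⟩ := h
  have hψ' : deriv ψ 0 ≠ 0 := by norm_num [hψ'₀]
  filter_upwards [hψ.eventually_analyticAt, hψ.deriv.continuousAt.eventually_ne hψ', hode]
    with a h₁ h₂ h₃
  exact ⟨h₁, h₂, h₃⟩

namespace GavrilovRegularAt

variable {ψ : ℝ → ℝ}

theorem analyticAt_gavrilovG {a : ℝ} (ha : GavrilovRegularAt ψ a) (x : ℝ) :
    AnalyticAt ℝ (gavrilovG ψ x) a := by
  have := ha.deriv_ne_zero
  have := ha.analyticAt
  unfold gavrilovG gavrilovF gavrilovH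
  fun_prop (disch := assumption)

theorem hasDerivAt_gavrilovG_comp {u : ℝ → ℝ} {t : ℝ} (hψ : GavrilovRegularAt ψ (u t))
    (hu : HasDerivAt u (gavrilovF ψ t (u t)) t) :
    HasDerivAt (fun s => gavrilovG ψ s (u s))
      (-4 * t * deriv ψ (u t) * gavrilovG ψ t (u t)) t := by
  have hne := hψ.deriv_ne_zero
  have hP := hψ.analyticAt.differentiableAt.hasDerivAt.comp t hu
  have hQ := hψ.analyticAt.deriv.differentiableAt.hasDerivAt.comp t hu
  have hs := hasDerivAt_id t
  have := (((hs.fun_pow 2).const_mul 12).mul hu).sub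
    ((((hs.const_mul (-2)).mul hP).add ((hs.fun_pow 3).const_mul 2)).fun_pow 2) |>.sub
    ((hu.const_mul 6).mul (((hasDerivAt_const t 1).div hQ hne).add (hP.const_mul 2)))
  refine this.congr_deriv ?_
  simp only [gavrilovG, gavrilovF, gavrilovH, id, Function.comp_apply, Pi.add_apply,
    Pi.mul_apply, Pi.div_apply]
  field_simp
  linear_combination (-4 * t * (ψ (u t) - t ^ 2)) * hψ.ode

end GavrilovRegularAt

namespace SolvesSystem

variable {ψ : ℝ → ℝ} {α : ℝ → ℝ → ℝ}

theorem eventually_regularAt (h : GavrilovODE ψ)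
    (hα : SolvesSystem (gavrilovF ψ) (gavrilovG ψ) α) :
    ∀ᶠ q : ℝ × ℝ in 𝓝 (1, 0), GavrilovRegularAt ψ (α q.1 q.2) := by
  obtain ⟨hαan, hα₀, -, -⟩ := hα
  have hαc : Tendsto (fun q : ℝ × ℝ => α q.1 q.2) (𝓝 (1, 0)) (𝓝 0) := by
    simpa [ContinuousAt, hα₀] using hαan.continuousAt
  exact hαc.eventually h.eventually_regularAt

theorem eventually_gavrilovG_eq_zero (h : GavrilovODE ψ)
    (hα : SolvesSystem (gavrilovF ψ) (gavrilovG ψ) α) :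
    ∀ᶠ x in 𝓝 1, gavrilovG ψ x (α x 0) = 0 := by
  have hreg := (hα.eventually_regularAt h).curry_nhds.mono fun _ hx => hx.self_of_nhds
  obtain ⟨hαan, hα₀, -, hpde⟩ := hα
  have hpde₀ := hpde.curry_nhds.mono fun _ hx => hx.self_of_nhds
  have han := (hαan.comp₂ analyticAt_id analyticAt_const).eventually_analyticAt
  refine eventuallyEq_zero_of_hasDerivAt_mul_self (c := fun t => -4 * t * deriv ψ (α t 0))
    ?_ ?_ (by simp [gavrilovG, gavrilovF, gavrilovH, hα₀, h.2.1])
  · have hψ' : ContinuousAt (deriv ψ) (α 1 0) := hreg.self_of_nhds.analyticAt.deriv.continuousAt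
    exact (continuousAt_const.mul continuousAt_id).mul
      (hψ'.comp (f := fun t => α t 0) han.self_of_nhds.continuousAt)
  · filter_upwards [hreg, hpde₀, han] with x hregx hpdex hanx
    refine hregx.hasDerivAt_gavrilovG_comp (u := fun s => α s 0) (t := x) ?_
    exact hpdex.1 ▸ hanx.differentiableAt.hasDerivAt

theorem eventually_even (h : GavrilovODE ψ) (hα : SolvesSystem (gavrilovF ψ) (gavrilovG ψ) α) :
    ∀ᶠ q : ℝ × ℝ in 𝓝 (1, 0), α q.1 q.2 = α q.1 (-q.2) := by
  have hw := hα.eventually_gavrilovG_eq_zero h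
  have hreg := hα.eventually_regularAt h
  obtain ⟨hαan, -, -, hpde⟩ := hα
  have hslices := (hαan.eventually_analyticAt.and (hpde.and hreg)).curry_nhds
  have hslice_even : ∀ᶠ x in 𝓝 1, (fun y => α x (-y)) =ᶠ[𝓝 0] fun y => α x y := by
    filter_upwards [hslices, hw] with x hx hwx
    obtain ⟨han, -, hregx⟩ := hx.self_of_nhds
    exact (han.comp₂ analyticAt_const analyticAt_id).eventually_even_of_sq_deriv_eq
      (hregx.analyticAt_gavrilovG x).contDiffAt (hx.mono fun y hy => hy.2.1.2) hwx
  have hflip : AnalyticAt ℝ (fun q : ℝ × ℝ => α q.1 (-q.2)) (1, 0) := by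
    have hα' : AnalyticAt ℝ (fun q : ℝ × ℝ => α q.1 q.2) ((1 : ℝ), -(0 : ℝ)) := by
      simpa using hαan
    exact hα'.comp (f := fun q : ℝ × ℝ => (q.1, -q.2)) (x := (1, 0))
      (analyticAt_fst.prod analyticAt_snd.neg)
  exact (hflip.eventuallyEq_of_eventually_eventuallyEq_slice hαan hslice_even).mono
    fun q hq => hq.symm

end SolvesSystem

/-- Remark 2: `α(x,y) = α(x,−y)`, and consequently `G(x, α(x,0)) = 0` for `x` near `1`. -/
theorem gavrilov_alpha_even (ψ : ℝ → ℝ) (h : GavrilovODE ψ)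
    (F : ℝ → ℝ → ℝ) (hF : ∀ x α, F x α = -2*x*ψ α + 2*x^3)
    (H : ℝ → ℝ) (hH : ∀ α, H α = 6*α*(1/deriv ψ α + 2*ψ α))
    (G : ℝ → ℝ → ℝ) (hG : ∀ x α, G x α = 12*x^2*α - (F x α)^2 - H α)
    (α : ℝ → ℝ → ℝ) (hα : SolvesSystem F G α) :
    (∀ᶠ q : ℝ × ℝ in nhds (1, 0), α q.1 q.2 = α q.1 (-q.2)) ∧
    ∀ᶠ x in nhds (1:ℝ), G x (α x 0) = 0 := by
  obtain rfl : F = gavrilovF ψ := funext₂ hF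
  obtain rfl : H = gavrilovH ψ := funext hH
  obtain rfl : G = gavrilovG ψ := funext₂ hG
  exact ⟨hα.eventually_even h, hα.eventually_gavrilovG_eq_zero h⟩
end

section
/- The Taylor expansion of α(x,y) at (1,0) begins α(x,y) = 2(x−1)² + 2y² + 3(x−1)³ + 3(x−1)y² + O((|x−1|+|y|)⁴). -/
/-!
At `(1, 0)` both `F` and `G` vanish, so `α` and its gradient vanish there. Differentiating
`∂ₓα = F(x, α)` gives `∂ₓ²α` and `∂ᵧ∂ₓα`; differentiating `(∂ᵧα)² = G(x, α)` in `y` gives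
`∂ᵧα · (2 ∂ᵧ²α - ∂G/∂α) = 0`, and since `∂ᵧα` is analytic and not identically zero, the identity
theorem yields `2 ∂ᵧ²α = ∂G/∂α` near `(1, 0)`. This expresses every second derivative of `α` near
`(1, 0)` through `x`, `α` and `∇α`; evaluating at `(1, 0)`, and differentiating once more, gives
the Taylor coefficients of order two and three in terms of `ψ(0) = 1`, `ψ'(0) = -3/4` and
`H'(0) = 6 (1 / ψ'(0) + 2 ψ(0)) = 4`. Taylor's formula for the analytic `α` concludes.
-/

open Filter Topology
open scoped Nat

section General

variable {𝕜 E F : Type*} [NontriviallyNormedField 𝕜] [NormedAddCommGroup E] [NormedSpace 𝕜 E]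
  [NormedAddCommGroup F] [NormedSpace 𝕜 F]

theorem AnalyticAt.fderiv_apply [CompleteSpace F] {f : E → F} {x : E} (hf : AnalyticAt 𝕜 f x)
    (v : E) : AnalyticAt 𝕜 (fun y ↦ fderiv 𝕜 f y v) x :=
  ((ContinuousLinearMap.apply 𝕜 F v).analyticAt _).comp hf.fderiv

theorem iteratedFDeriv_succ_apply_const {f : E → F} {x v : E} {n : ℕ}
    (hf : ContDiffAt 𝕜 (n + 1) f x) :
    iteratedFDeriv 𝕜 (n + 1) f x (fun _ ↦ v) =
      iteratedFDeriv 𝕜 n (fun y ↦ fderiv 𝕜 f y v) x (fun _ ↦ v) := by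
  rw [iteratedFDeriv_succ_apply_right, show (fun y ↦ fderiv 𝕜 f y v) =
      ContinuousLinearMap.apply 𝕜 F v ∘ fderiv 𝕜 f from rfl,
    (ContinuousLinearMap.apply 𝕜 F v).iteratedFDeriv_comp_left hf.fderiv_right_succ le_rfl]
  rfl

theorem AnalyticAt.isBigO_sub_sum_iteratedFDeriv [CharZero 𝕜] [CompleteSpace F] {f : E → F}
    {x : E} (hf : AnalyticAt 𝕜 f x) (N : ℕ) :
    (fun y ↦ f y - ∑ n ∈ Finset.range N,
        (n ! : 𝕜)⁻¹ • iteratedFDeriv 𝕜 n f x (fun _ ↦ y - x)) =O[𝓝 x]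
      fun y ↦ ‖y - x‖ ^ N := by
  obtain ⟨p, r, hp⟩ := hf
  have hsum : ∀ y, p.partialSum N y =
      ∑ n ∈ Finset.range N, (n ! : 𝕜)⁻¹ • iteratedFDeriv 𝕜 n f x (fun _ ↦ y) := by
    intro y
    refine Finset.sum_congr rfl fun n _ ↦ ?_
    rw [← hp.factorial_smul y n, ← Nat.cast_smul_eq_nsmul 𝕜, smul_smul,
      inv_mul_cancel₀ (by exact_mod_cast n.factorial_ne_zero), one_smul]
  have h := (hp.hasFPowerSeriesAt.isBigO_sub_partialSum_pow N).comp_tendsto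
    (tendsto_sub_nhds_zero_iff.2 (tendsto_id (x := 𝓝 x)))
  simpa only [Function.comp_def, add_sub_cancel, hsum, id] using h

end General

theorem fderiv_fderiv_apply_comm {𝕜 E F : Type*} [RCLike 𝕜] [NormedAddCommGroup E]
    [NormedSpace 𝕜 E] [NormedAddCommGroup F] [NormedSpace 𝕜 F] {f : E → F} {x : E}
    (hf : ContDiffAt 𝕜 2 f x) (v w : E) :
    fderiv 𝕜 (fun y ↦ fderiv 𝕜 f y v) x w = fderiv 𝕜 (fun y ↦ fderiv 𝕜 f y w) x v := by
  have hd : DifferentiableAt 𝕜 (fderiv 𝕜 f) x :=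
    (hf.fderiv_right (m := 1) le_rfl).differentiableAt one_ne_zero
  rw [fderiv_clm_apply hd (differentiableAt_const v), fderiv_clm_apply hd (differentiableAt_const w)]
  simpa using hf.isSymmSndFDerivAt (by simp) w v

theorem eventuallyEq_zero_of_mul_eventuallyEq_zero {E : Type*} [NormedAddCommGroup E]
    [NormedSpace ℝ E] {u v : E → ℝ} {x : E} (hu : ∀ᶠ z in 𝓝 x, AnalyticAt ℝ u z)
    (hv : ∀ᶠ z in 𝓝 x, ContinuousAt v z) (huv : ∀ᶠ z in 𝓝 x, u z * v z = 0)
    (hu0 : ¬ u =ᶠ[𝓝 x] 0) : v =ᶠ[𝓝 x] 0 := by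
  obtain ⟨r, hr, hball⟩ := Metric.eventually_nhds_iff_ball.1 ((hu.and hv).and huv)
  refine eventually_of_mem (Metric.ball_mem_nhds x hr) fun z hz ↦ ?_
  by_contra hvz
  -- near a point where `v ≠ 0`, `u` vanishes, hence on the whole ball by the identity theorem
  have hu_near : u =ᶠ[𝓝 z] 0 := by
    filter_upwards [(hball z hz).1.2.eventually_ne hvz, Metric.isOpen_ball.mem_nhds hz]
      with y hy hyB
    exact (mul_eq_zero.1 (hball y hyB).2).resolve_right hy
  have hu_ball := AnalyticOnNhd.eqOn_zero_of_preconnected_of_eventuallyEq_zero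
    (fun y hy ↦ (hball y hy).1.1) (convex_ball x r).isPreconnected hz hu_near
  exact hu0 (eventually_of_mem (Metric.ball_mem_nhds x hr) hu_ball)

section Plane

variable {F : Type*} [NormedAddCommGroup F] [NormedSpace ℝ F]

theorem ContinuousLinearMap.apply_eq_fst_smul_add_snd_smul (L : ℝ × ℝ →L[ℝ] F) (w : ℝ × ℝ) :
    L w = w.1 • L (1, 0) + w.2 • L (0, 1) := by
  rw [← map_smul, ← map_smul, ← map_add]
  simp

theorem deriv_left_eq_fderiv_uncurry {f : ℝ → ℝ → F} {x y : ℝ}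
    (hf : DifferentiableAt ℝ (Function.uncurry f) (x, y)) :
    deriv (fun x' ↦ f x' y) x = fderiv ℝ (Function.uncurry f) (x, y) (1, 0) :=
  (hf.hasFDerivAt.comp_hasDerivAt (l := Function.uncurry f) x
    ((hasDerivAt_id x).prodMk (hasDerivAt_const x y))).deriv

theorem deriv_right_eq_fderiv_uncurry {f : ℝ → ℝ → F} {x y : ℝ}
    (hf : DifferentiableAt ℝ (Function.uncurry f) (x, y)) :
    deriv (f x) y = fderiv ℝ (Function.uncurry f) (x, y) (0, 1) :=
  (hf.hasFDerivAt.comp_hasDerivAt (l := Function.uncurry f) y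
    ((hasDerivAt_const y x).prodMk (hasDerivAt_id y))).deriv

theorem Prod.norm_le_abs_fst_add_abs_snd (q : ℝ × ℝ) : ‖q‖ ≤ |q.1| + |q.2| :=
  norm_prod_le_iff.2 ⟨by simp, by simp⟩

end Plane

namespace Gavrilov

open ContinuousLinearMap

noncomputable section

def dx (f : ℝ × ℝ → ℝ) (z : ℝ × ℝ) : ℝ := fderiv ℝ f z (1, 0)

def dy (f : ℝ × ℝ → ℝ) (z : ℝ × ℝ) : ℝ := fderiv ℝ f z (0, 1)

def F (ψ : ℝ → ℝ) (x a : ℝ) : ℝ := -2 * x * ψ a + 2 * x ^ 3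

def H (ψ : ℝ → ℝ) (a : ℝ) : ℝ := 6 * a * (1 / deriv ψ a + 2 * ψ a)

def G (ψ H : ℝ → ℝ) (x a : ℝ) : ℝ := 12 * x ^ 2 * a - F ψ x a ^ 2 - H a

def dGda (ψ H : ℝ → ℝ) (x a : ℝ) : ℝ := 12 * x ^ 2 + 4 * x * deriv ψ a * F ψ x a - deriv H a

theorem analyticAt_H {ψ : ℝ → ℝ} (hψ : AnalyticAt ℝ ψ 0) (hψ' : deriv ψ 0 ≠ 0) :
    AnalyticAt ℝ (H ψ) 0 := by
  have := hψ.deriv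
  unfold H
  fun_prop (disch := assumption)

theorem deriv_H_zero {ψ : ℝ → ℝ} (hψ : AnalyticAt ℝ ψ 0) (hψ' : deriv ψ 0 ≠ 0) :
    deriv (H ψ) 0 = 6 * (1 / deriv ψ 0 + 2 * ψ 0) := by
  have hg : DifferentiableAt ℝ (fun a ↦ 1 / deriv ψ a + 2 * ψ a) 0 := by
    have := hψ.deriv.differentiableAt
    have := hψ.differentiableAt
    fun_prop (disch := assumption)
  have h : HasDerivAt (H ψ) _ 0 := ((hasDerivAt_id (0 : ℝ)).const_mul 6).mul hg.hasDerivAt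
  simp [h.deriv]

theorem hasFDerivAt_F {ψ : ℝ → ℝ} {A : ℝ × ℝ → ℝ} {z : ℝ × ℝ} (hA : DifferentiableAt ℝ A z)
    (hψ : DifferentiableAt ℝ ψ (A z)) :
    HasFDerivAt (fun q ↦ F ψ q.1 (A q))
      ((-2 * ψ (A z) + 6 * z.1 ^ 2) • fst ℝ ℝ ℝ + (-2 * z.1 * deriv ψ (A z)) • fderiv ℝ A z) z := by
  have hψA := hψ.hasDerivAt.comp_hasFDerivAt z hA.hasFDerivAt
  have h : HasFDerivAt (fun q ↦ F ψ q.1 (A q)) _ z :=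
    ((hasFDerivAt_fst.const_mul (-2)).mul hψA).add ((hasFDerivAt_fst.pow 3).const_mul 2)
  refine h.congr_fderiv (ContinuousLinearMap.ext fun v ↦ ?_)
  simp only [add_apply, smul_apply, coe_fst', smul_eq_mul, nsmul_eq_mul, Function.comp_apply]
  ring

theorem fderiv_G_apply_snd {ψ H : ℝ → ℝ} {A : ℝ × ℝ → ℝ} {z : ℝ × ℝ}
    (hA : DifferentiableAt ℝ A z) (hψ : DifferentiableAt ℝ ψ (A z))
    (hH : DifferentiableAt ℝ H (A z)) :
    fderiv ℝ (fun q ↦ G ψ H q.1 (A q)) z (0, 1) = dGda ψ H z.1 (A z) * dy A z := by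
  have hF := hasFDerivAt_F hA hψ
  have hHA := hH.hasDerivAt.comp_hasFDerivAt z hA.hasFDerivAt
  have h : HasFDerivAt (fun q ↦ G ψ H q.1 (A q)) _ z :=
    ((((hasFDerivAt_fst.pow 2).const_mul 12).mul hA.hasFDerivAt).sub (hF.pow 2)).sub hHA
  rw [h.fderiv]
  simp only [sub_apply, add_apply, smul_apply, coe_fst', smul_eq_mul, nsmul_eq_mul,
    dGda, dy]
  ring

structure IsSolution (ψ H : ℝ → ℝ) (A : ℝ × ℝ → ℝ) : Prop where
  analyticAt_ψ : AnalyticAt ℝ ψ 0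
  ψ_zero : ψ 0 = 1
  deriv_ψ_zero : deriv ψ 0 = -(3 / 4)
  analyticAt_H : AnalyticAt ℝ H 0
  H_zero : H 0 = 0
  deriv_H_zero : deriv H 0 = 4
  analyticAt : AnalyticAt ℝ A (1, 0)
  base : A (1, 0) = 0
  dx_eq : ∀ᶠ z in 𝓝 (1, 0), dx A z = F ψ z.1 (A z)
  dy_sq : ∀ᶠ z in 𝓝 (1, 0), dy A z ^ 2 = G ψ H z.1 (A z)
  dy_not_eventuallyEq_zero : ¬ dy A =ᶠ[𝓝 (1, 0)] 0

/-- `D²A(z)(w, w)` near `(1, 0)`, computed from `∂ₓ²A = ∂ₓF`, `∂ₓ∂ᵧA = -2xψ'(A) ∂ᵧA` and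
`2 ∂ᵧ²A = ∂G/∂a`. -/
def hessForm (ψ H : ℝ → ℝ) (A : ℝ × ℝ → ℝ) (w z : ℝ × ℝ) : ℝ :=
  (-2 * ψ (A z) + 6 * z.1 ^ 2) * w.1 ^ 2
    - 2 * z.1 * deriv ψ (A z) * (w.1 ^ 2 * dx A z + 2 * w.1 * w.2 * dy A z)
    + w.2 ^ 2 / 2 * dGda ψ H z.1 (A z)

namespace IsSolution

variable {ψ H : ℝ → ℝ} {A : ℝ × ℝ → ℝ} (hA : IsSolution ψ H A)
include hA

theorem eventually_analyticAt_comp {g : ℝ → ℝ} (hg : AnalyticAt ℝ g 0) :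
    ∀ᶠ z in 𝓝 (1, 0), AnalyticAt ℝ g (A z) := by
  have hcont := hA.analyticAt.continuousAt.tendsto
  rw [hA.base] at hcont
  exact hcont.eventually hg.eventually_analyticAt

theorem eventually_hasFDerivAt_dx : ∀ᶠ z in 𝓝 (1, 0), HasFDerivAt (dx A)
    ((-2 * ψ (A z) + 6 * z.1 ^ 2) • fst ℝ ℝ ℝ + (-2 * z.1 * deriv ψ (A z)) • fderiv ℝ A z) z := by
  filter_upwards [hA.dx_eq.eventually_nhds, hA.analyticAt.eventually_analyticAt,
    hA.eventually_analyticAt_comp hA.analyticAt_ψ] with z hz hAz hψz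
  exact (hasFDerivAt_F hAz.differentiableAt hψz.differentiableAt).congr_of_eventuallyEq hz

theorem eventually_fderiv_dy_apply_fst : ∀ᶠ z in 𝓝 (1, 0),
    fderiv ℝ (dy A) z (1, 0) = -2 * z.1 * deriv ψ (A z) * dy A z := by
  filter_upwards [hA.eventually_hasFDerivAt_dx, hA.analyticAt.eventually_analyticAt]
    with z hz hAz
  have hsymm : fderiv ℝ (dy A) z (1, 0) = fderiv ℝ (dx A) z (0, 1) :=
    fderiv_fderiv_apply_comm hAz.contDiffAt _ _
  simp [hsymm, hz.fderiv, dy]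

/-- Differentiating `(∂ᵧA)² = G` in `y` gives `∂ᵧA (2 ∂ᵧ²A - ∂G/∂a) = 0`; since `∂ᵧA` is
analytic and not identically zero, the second factor vanishes. -/
theorem eventually_two_mul_fderiv_dy_apply_snd : ∀ᶠ z in 𝓝 (1, 0),
    2 * fderiv ℝ (dy A) z (0, 1) = dGda ψ H z.1 (A z) := by
  have hdψ := hA.analyticAt_ψ.deriv
  have hdH := hA.analyticAt_H.deriv
  have hdy : ∀ᶠ z in 𝓝 (1, 0), AnalyticAt ℝ (dy A) z :=
    hA.analyticAt.eventually_analyticAt.mono fun z hz ↦ hz.fderiv_apply _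
  have hprod : ∀ᶠ z in 𝓝 (1, 0),
      dy A z * (2 * fderiv ℝ (dy A) z (0, 1) - dGda ψ H z.1 (A z)) = 0 := by
    filter_upwards [hA.dy_sq.eventually_nhds, hdy, hA.analyticAt.eventually_analyticAt,
      hA.eventually_analyticAt_comp hA.analyticAt_ψ,
      hA.eventually_analyticAt_comp hA.analyticAt_H] with z hz hdyz hAz hψz hHz
    have hsq : fderiv ℝ (fun q ↦ dy A q ^ 2) z (0, 1) = 2 * dy A z * fderiv ℝ (dy A) z (0, 1) := by
      rw [(hdyz.differentiableAt.hasFDerivAt.pow 2).fderiv]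
      simp
    have hz : (fun q ↦ dy A q ^ 2) =ᶠ[𝓝 z] fun q ↦ G ψ H q.1 (A q) := hz
    rw [hz.fderiv_eq, fderiv_G_apply_snd hAz.differentiableAt hψz.differentiableAt
      hHz.differentiableAt] at hsq
    linear_combination -hsq
  have hcont : ∀ᶠ z in 𝓝 (1, 0),
      ContinuousAt (fun q ↦ 2 * fderiv ℝ (dy A) q (0, 1) - dGda ψ H q.1 (A q)) z := by
    filter_upwards [hdy, hA.analyticAt.eventually_analyticAt,
      hA.eventually_analyticAt_comp hA.analyticAt_ψ, hA.eventually_analyticAt_comp hdψ,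
      hA.eventually_analyticAt_comp hdH] with z hdyz hAz hψz hdψz hdHz
    have := (hdyz.fderiv_apply (0, 1)).continuousAt
    have := hAz.continuousAt
    have := hψz.continuousAt
    have := hdψz.continuousAt
    have := hdHz.continuousAt
    unfold dGda F
    fun_prop
  filter_upwards [eventuallyEq_zero_of_mul_eventuallyEq_zero hdy hcont hprod
    hA.dy_not_eventuallyEq_zero] with z hz
  exact sub_eq_zero.1 hz

theorem fderiv_fderiv_apply_self_eventuallyEq (w : ℝ × ℝ) :
    (fun z ↦ fderiv ℝ (fun y ↦ fderiv ℝ A y w) z w) =ᶠ[𝓝 (1, 0)] hessForm ψ H A w := by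
  filter_upwards [hA.eventually_hasFDerivAt_dx, hA.eventually_fderiv_dy_apply_fst,
    hA.eventually_two_mul_fderiv_dy_apply_snd, hA.analyticAt.eventually_analyticAt]
    with z hdx hdy₁ hdy₂ hAz
  have hdy : HasFDerivAt (dy A) (fderiv ℝ (dy A) z) z :=
    (hAz.fderiv_apply _).differentiableAt.hasFDerivAt
  have hsplit : (fun y ↦ fderiv ℝ A y w) = fun y ↦ w.1 * dx A y + w.2 * dy A y := by
    funext y
    simpa [dx, dy] using (fderiv ℝ A y).apply_eq_fst_smul_add_snd_smul w
  have h : HasFDerivAt (fun y ↦ w.1 * dx A y + w.2 * dy A y) _ z :=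
    (hdx.const_mul w.1).add (hdy.const_mul w.2)
  rw [hsplit, h.fderiv]
  simp only [add_apply, smul_apply, coe_fst', smul_eq_mul]
  rw [(fderiv ℝ (dy A) z).apply_eq_fst_smul_add_snd_smul w,
    (fderiv ℝ A z).apply_eq_fst_smul_add_snd_smul w]
  simp only [hdy₁, hessForm, dx, dy, smul_eq_mul]
  linear_combination (w.2 ^ 2 / 2) * hdy₂

theorem dx_base : dx A (1, 0) = 0 := by
  simp [hA.dx_eq.self_of_nhds, F, hA.base, hA.ψ_zero]

theorem dy_base : dy A (1, 0) = 0 := by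
  simpa [G, F, hA.base, hA.ψ_zero, hA.H_zero] using hA.dy_sq.self_of_nhds

theorem fderiv_base : fderiv ℝ A (1, 0) = 0 := by
  ext
  · exact hA.dx_base
  · exact hA.dy_base

theorem dGda_base : dGda ψ H 1 0 = 8 := by
  norm_num [dGda, F, hA.ψ_zero, hA.deriv_ψ_zero, hA.deriv_H_zero]

theorem hasFDerivAt_dx_base : HasFDerivAt (dx A) ((4 : ℝ) • fst ℝ ℝ ℝ) (1, 0) := by
  have h := hA.eventually_hasFDerivAt_dx.self_of_nhds
  rw [hA.base, hA.ψ_zero, hA.fderiv_base] at h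
  convert h using 2
  norm_num

theorem hasFDerivAt_dy_base : HasFDerivAt (dy A) ((4 : ℝ) • snd ℝ ℝ ℝ) (1, 0) := by
  have h₁ := hA.eventually_fderiv_dy_apply_fst.self_of_nhds
  have h₂ := hA.eventually_two_mul_fderiv_dy_apply_snd.self_of_nhds
  rw [hA.dy_base, mul_zero] at h₁
  rw [hA.base, hA.dGda_base] at h₂
  have h : HasFDerivAt (dy A) (fderiv ℝ (dy A) (1, 0)) (1, 0) :=
    (hA.analyticAt.fderiv_apply _).differentiableAt.hasFDerivAt
  refine h.congr_fderiv (ContinuousLinearMap.ext fun v ↦ ?_)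
  rw [apply_eq_fst_smul_add_snd_smul, h₁, smul_apply, coe_snd', smul_eq_mul, smul_eq_mul,
    smul_eq_mul]
  linear_combination (v.2 / 2) * h₂

theorem hessForm_base (w : ℝ × ℝ) : hessForm ψ H A w (1, 0) = 4 * w.1 ^ 2 + 4 * w.2 ^ 2 := by
  simp only [hessForm, hA.base, hA.ψ_zero, hA.dx_base, hA.dy_base]
  rw [hA.dGda_base]
  ring

theorem fderiv_hessForm_base (w : ℝ × ℝ) :
    fderiv ℝ (hessForm ψ H A w) (1, 0) w = 18 * w.1 ^ 3 + 18 * w.1 * w.2 ^ 2 := by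
  have hA' : HasFDerivAt A (0 : ℝ × ℝ →L[ℝ] ℝ) (1, 0) := by
    rw [← hA.fderiv_base]
    exact hA.analyticAt.differentiableAt.hasFDerivAt
  have hcomp : ∀ g : ℝ → ℝ, AnalyticAt ℝ g 0 →
      HasFDerivAt (fun z ↦ g (A z)) (0 : ℝ × ℝ →L[ℝ] ℝ) (1, 0) := by
    intro g hg
    rw [← hA.base] at hg
    exact (hg.differentiableAt.hasDerivAt.comp_hasFDerivAt _ hA').congr_fderiv (smul_zero _)
  have hψ := hcomp ψ hA.analyticAt_ψ
  have hdψ := hcomp _ hA.analyticAt_ψ.deriv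
  have hdH := hcomp _ hA.analyticAt_H.deriv
  have hF := hasFDerivAt_F hA.analyticAt.differentiableAt
    (by rw [hA.base]; exact hA.analyticAt_ψ.differentiableAt)
  have hx : HasFDerivAt (fun z : ℝ × ℝ ↦ z.1) (fst ℝ ℝ ℝ) (1, 0) := hasFDerivAt_fst
  have hdGda : HasFDerivAt (fun z ↦ dGda ψ H z.1 (A z)) _ (1, 0) :=
    (((hx.pow 2).const_mul 12).add (((hx.const_mul 4).mul hdψ).mul hF)).sub hdH
  have h : HasFDerivAt (hessForm ψ H A w) _ (1, 0) :=
    ((((hψ.const_mul (-2)).add ((hx.pow 2).const_mul 6)).mul_const (w.1 ^ 2)).sub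
      (((hx.const_mul 2).mul hdψ).mul ((hA.hasFDerivAt_dx_base.const_mul (w.1 ^ 2)).add
        (hA.hasFDerivAt_dy_base.const_mul (2 * w.1 * w.2))))).add
      (hdGda.const_mul (w.2 ^ 2 / 2))
  rw [h.fderiv]
  simp only [add_apply, sub_apply, smul_apply, coe_fst', coe_snd', zero_apply, smul_eq_mul,
    nsmul_eq_mul, Pi.add_apply, Pi.mul_apply, hA.base, hA.ψ_zero, hA.deriv_ψ_zero,
    hA.fderiv_base, hA.dx_base, hA.dy_base, F]
  ring

theorem iteratedFDeriv_two_base (w : ℝ × ℝ) :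
    iteratedFDeriv ℝ 2 A (1, 0) (fun _ ↦ w) = 4 * w.1 ^ 2 + 4 * w.2 ^ 2 := by
  rw [iteratedFDeriv_succ_apply_const hA.analyticAt.contDiffAt,
    iteratedFDeriv_succ_apply_const (hA.analyticAt.fderiv_apply w).contDiffAt,
    iteratedFDeriv_zero_apply, (hA.fderiv_fderiv_apply_self_eventuallyEq w).eq_of_nhds,
    hA.hessForm_base]

theorem iteratedFDeriv_three_base (w : ℝ × ℝ) :
    iteratedFDeriv ℝ 3 A (1, 0) (fun _ ↦ w) = 18 * w.1 ^ 3 + 18 * w.1 * w.2 ^ 2 := by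
  rw [iteratedFDeriv_succ_apply_const hA.analyticAt.contDiffAt,
    iteratedFDeriv_succ_apply_const (hA.analyticAt.fderiv_apply w).contDiffAt,
    iteratedFDeriv_one_apply, (hA.fderiv_fderiv_apply_self_eventuallyEq w).fderiv_eq,
    hA.fderiv_hessForm_base]

theorem isBigO_sub_taylor :
    (fun q : ℝ × ℝ ↦ A q - (2 * (q.1 - 1) ^ 2 + 2 * q.2 ^ 2 + 3 * (q.1 - 1) ^ 3
      + 3 * (q.1 - 1) * q.2 ^ 2)) =O[𝓝 (1, 0)] fun q ↦ ‖q - (1, 0)‖ ^ 4 := by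
  refine (hA.analyticAt.isBigO_sub_sum_iteratedFDeriv 4).congr_left fun q ↦ ?_
  simp [Finset.sum_range_succ, hA.base, hA.fderiv_base, hA.iteratedFDeriv_two_base,
    hA.iteratedFDeriv_three_base]
  ring

end IsSolution

end

theorem isSolution_of_solvesSystem {ψ : ℝ → ℝ} {α : ℝ → ℝ → ℝ} (hψ : GavrilovODE ψ)
    (hα : SolvesSystem (F ψ) (G ψ (H ψ)) α) : IsSolution ψ (H ψ) (Function.uncurry α) := by
  obtain ⟨hψa, hψ0, hψ'0, -⟩ := hψ
  obtain ⟨hαa, hα0, hdy, hsys⟩ := hα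
  have hψ' : deriv ψ 0 ≠ 0 := by rw [hψ'0]; norm_num
  have hpartial : ∀ᶠ q in 𝓝 (1, 0), deriv (fun x ↦ α x q.2) q.1 = dx (Function.uncurry α) q ∧
      deriv (α q.1) q.2 = dy (Function.uncurry α) q :=
    hαa.eventually_analyticAt.mono fun q hq ↦ ⟨deriv_left_eq_fderiv_uncurry hq.differentiableAt,
      deriv_right_eq_fderiv_uncurry hq.differentiableAt⟩
  refine ⟨hψa, hψ0, hψ'0, analyticAt_H hψa hψ', by simp [H], ?_, hαa, hα0, ?_, ?_, ?_⟩
  · rw [deriv_H_zero hψa hψ', hψ'0, hψ0]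
    norm_num
  · filter_upwards [hsys, hpartial] with q hq hq'
    exact hq'.1 ▸ hq.1
  · filter_upwards [hsys, hpartial] with q hq hq'
    exact hq'.2 ▸ hq.2
  · refine fun h ↦ hdy ?_
    filter_upwards [h, hpartial] with q hq hq'
    rw [hq'.2, hq, Pi.zero_apply]

end Gavrilov

/-- Remark 4: the Taylor expansion of `α` at `(1,0)` begins
`α(x,y) = 2(x−1)² + 2y² + 3(x−1)³ + 3(x−1)y² + O((|x−1|+|y|)⁴)`. -/
theorem gavrilov_alpha_taylor (ψ : ℝ → ℝ) (h : GavrilovODE ψ)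
    (F : ℝ → ℝ → ℝ) (hF : ∀ x α, F x α = -2*x*ψ α + 2*x^3)
    (H : ℝ → ℝ) (hH : ∀ α, H α = 6*α*(1/deriv ψ α + 2*ψ α))
    (G : ℝ → ℝ → ℝ) (hG : ∀ x α, G x α = 12*x^2*α - (F x α)^2 - H α)
    (α : ℝ → ℝ → ℝ) (hα : SolvesSystem F G α) :
    ∃ C : ℝ, ∀ᶠ q : ℝ × ℝ in nhds (1, 0),
      |α q.1 q.2 - (2*(q.1 - 1)^2 + 2*q.2^2 + 3*(q.1 - 1)^3 + 3*(q.1 - 1)*q.2^2)|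
        ≤ C * (|q.1 - 1| + |q.2|)^4 := by
  obtain rfl : F = Gavrilov.F ψ := funext₂ hF
  obtain rfl : H = Gavrilov.H ψ := funext hH
  obtain rfl : G = Gavrilov.G ψ (Gavrilov.H ψ) := funext₂ hG
  have hnorm : (fun q : ℝ × ℝ ↦ ‖q - (1, 0)‖ ^ 4) =O[𝓝 (1, 0)]
      fun q ↦ (|q.1 - 1| + |q.2|) ^ 4 := by
    refine Asymptotics.isBigO_of_le _ fun q ↦ ?_
    rw [norm_pow, norm_pow, norm_norm, Real.norm_eq_abs, abs_of_nonneg (by positivity)]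
    have hle := (q - (1, 0)).norm_le_abs_fst_add_abs_snd
    rw [Prod.fst_sub, Prod.snd_sub, sub_zero] at hle
    gcongr
  obtain ⟨C, hC⟩ :=
    ((Gavrilov.isSolution_of_solvesSystem h hα).isBigO_sub_taylor.trans hnorm).bound
  refine ⟨C, hC.mono fun q hq ↦ ?_⟩
  rwa [Real.norm_eq_abs, Real.norm_eq_abs,
    abs_of_nonneg (by positivity : (0 : ℝ) ≤ (|q.1 - 1| + |q.2|) ^ 4)] at hq
end

section
/- Let (u, p) be a smooth steady Euler flow on an open set, i.e., (u·∇)u = −∇p and div u = 0, which additionally satisfies u·∇p = 0. Then for any smooth function ω: ℝ → ℝ, the field ũ = ω(p)·u is again a steady Euler flow: div ũ = 0, and (ũ·∇)ũ = −ω(p)²·∇p; in particular if p̃ is any function with ∇p̃ = ω(p)²·∇p then (ũ, p̃) solves the Euler equations. -/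
open scoped Topology

/-- Directional derivative of a scalar function on `ℝ³` along the `j`-th coordinate. -/
noncomputable def pd (f : EuclideanSpace ℝ (Fin 3) → ℝ)
    (x : EuclideanSpace ℝ (Fin 3)) (j : Fin 3) : ℝ :=
  fderiv ℝ f x (EuclideanSpace.single j 1)

/-- If `(u,p)` is a smooth steady Euler flow on an open set with `u·∇p = 0`, then for
any smooth `ω : ℝ → ℝ` the rescaled field `ũ = ω(p)u` is again a steady Euler flow,
with `(ũ·∇)ũ = −ω(p)²∇p`. -/
theorem euler_rescale (s : Set (EuclideanSpace ℝ (Fin 3))) (hs : IsOpen s)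
    (u : EuclideanSpace ℝ (Fin 3) → EuclideanSpace ℝ (Fin 3))
    (p : EuclideanSpace ℝ (Fin 3) → ℝ)
    (hu : ContDiffOn ℝ (⊤ : ℕ∞) u s) (hp : ContDiffOn ℝ (⊤ : ℕ∞) p s)
    (heuler : ∀ x ∈ s, ∀ i : Fin 3,
      ∑ j : Fin 3, u x j * pd (fun y => u y i) x j = -pd p x i)
    (hdiv : ∀ x ∈ s, ∑ i : Fin 3, pd (fun y => u y i) x i = 0)
    (htransport : ∀ x ∈ s, ∑ i : Fin 3, u x i * pd p x i = 0)
    (ω : ℝ → ℝ) (hω : ContDiff ℝ (⊤ : ℕ∞) ω)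
    (ut : EuclideanSpace ℝ (Fin 3) → EuclideanSpace ℝ (Fin 3))
    (hut : ∀ x, ut x = ω (p x) • u x) :
    (∀ x ∈ s, ∑ i : Fin 3, pd (fun y => ut y i) x i = 0) ∧
    (∀ x ∈ s, ∀ i : Fin 3,
      ∑ j : Fin 3, ut x j * pd (fun y => ut y i) x j = -((ω (p x))^2 * pd p x i)) ∧
    ∀ pt : EuclideanSpace ℝ (Fin 3) → ℝ,
      (∀ x ∈ s, ∀ i : Fin 3, pd pt x i = (ω (p x))^2 * pd p x i) →
      ∀ x ∈ s, ∀ i : Fin 3,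
        ∑ j : Fin 3, ut x j * pd (fun y => ut y i) x j = -pd pt x i := by
  -- key derivative computation
  have hder : ∀ x ∈ s, ∀ i j : Fin 3,
      pd (fun y => ut y i) x j
        = deriv ω (p x) * pd p x j * u x i + ω (p x) * pd (fun y => u y i) x j := by
    intro x hx i j
    have hpx : DifferentiableAt ℝ p x :=
      (hp.contDiffAt (hs.mem_nhds hx)).differentiableAt (by simp)
    have hux : DifferentiableAt ℝ u x :=
      (hu.contDiffAt (hs.mem_nhds hx)).differentiableAt (by simp)
    have hui : DifferentiableAt ℝ (fun y => u y i) x :=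
      ((EuclideanSpace.proj i : EuclideanSpace ℝ (Fin 3) →L[ℝ] ℝ).differentiableAt).comp x hux
    have hωd : DifferentiableAt ℝ ω (p x) := (hω.differentiable (by simp)) (p x)
    have hcomp : DifferentiableAt ℝ (fun y => ω (p y)) x := hωd.comp x hpx
    have heq : (fun y => ut y i) = fun y => ω (p y) * u y i := by
      funext y; rw [hut y]; rfl
    have hmap : ∀ a : ℝ, fderiv ℝ ω (p x) a = a * deriv ω (p x) := by
      intro a
      conv_lhs => rw [show a = a • (1:ℝ) by simp]
      rw [map_smul, fderiv_apply_one_eq_deriv, smul_eq_mul]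
    have hcd : fderiv ℝ (fun y => ω (p y)) x (EuclideanSpace.single j 1)
        = deriv ω (p x) * pd p x j := by
      rw [show (fun y => ω (p y)) = ω ∘ p from rfl, fderiv_comp x hωd hpx]
      simp only [ContinuousLinearMap.coe_comp', Function.comp_apply]
      rw [hmap]
      rw [pd]; ring
    rw [pd, heq, fderiv_fun_mul hcomp hui]
    simp only [ContinuousLinearMap.add_apply, ContinuousLinearMap.smul_apply, smul_eq_mul]
    rw [hcd]
    simp only [pd]
    ring
  have hutc : ∀ x, ∀ j : Fin 3, ut x j = ω (p x) * u x j := by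
    intro x j; rw [hut x]; rfl
  have hconv : ∀ x ∈ s, ∀ i : Fin 3,
      ∑ j : Fin 3, ut x j * pd (fun y => ut y i) x j = -((ω (p x))^2 * pd p x i) := by
    intro x hx i
    calc ∑ j : Fin 3, ut x j * pd (fun y => ut y i) x j
        = ∑ j : Fin 3, (ω (p x) * deriv ω (p x) * u x i * (u x j * pd p x j)
            + (ω (p x))^2 * (u x j * pd (fun y => u y i) x j)) := by
          refine Finset.sum_congr rfl fun j _ => ?_
          rw [hder x hx i j, hutc x j]; ring
      _ = ω (p x) * deriv ω (p x) * u x i * (∑ j : Fin 3, u x j * pd p x j)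
            + (ω (p x))^2 * (∑ j : Fin 3, u x j * pd (fun y => u y i) x j) := by
          rw [Finset.sum_add_distrib, Finset.mul_sum, Finset.mul_sum]
      _ = -((ω (p x))^2 * pd p x i) := by
          rw [htransport x hx, heuler x hx i]; ring
  refine ⟨?_, hconv, ?_⟩
  · intro x hx
    calc ∑ i : Fin 3, pd (fun y => ut y i) x i
        = ∑ i : Fin 3, (deriv ω (p x) * (u x i * pd p x i)
            + ω (p x) * pd (fun y => u y i) x i) := by
          refine Finset.sum_congr rfl fun i _ => ?_
          rw [hder x hx i i]; ring
      _ = deriv ω (p x) * (∑ i : Fin 3, u x i * pd p x i)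
            + ω (p x) * (∑ i : Fin 3, pd (fun y => u y i) x i) := by
          rw [Finset.sum_add_distrib, Finset.mul_sum, Finset.mul_sum]
      _ = 0 := by rw [htransport x hx, hdiv x hx]; ring
  · intro pt hpt x hx i
    rw [hpt x hx i]
    exact hconv x hx i
end

section
/- For the Gavrilov flow u = (1/ρ)·((∂p/∂z)·e_ρ − (∂p/∂ρ)·e_z + b·e_φ) with p = aR⁴/4, b = (R³/4)√(H(a)), a = α(ρ/R, z/R), one has |u|² = 3p everywhere in its domain; consequently the Bernoulli function B = p + |u|²/2 equals (5/2)p and is a function of the pressure. -/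
open Filter Topology

theorem deriv_comp_div_const {𝕜 E : Type*} [NontriviallyNormedField 𝕜] [NormedAddCommGroup E]
    [NormedSpace 𝕜 E] (f : 𝕜 → E) (c x : 𝕜) :
    deriv (fun y => f (y / c)) x = c⁻¹ • deriv f (x / c) := by
  simpa only [div_eq_inv_mul] using deriv_comp_mul_left c⁻¹ f x

noncomputable def gavrilovCoeff (ψ : ℝ → ℝ) (t : ℝ) : ℝ := 6 * (1 / deriv ψ t + 2 * ψ t)

theorem tendsto_gavrilovCoeff {ψ : ℝ → ℝ} (hψ : AnalyticAt ℝ ψ 0) (h0 : ψ 0 = 1)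
    (h0' : deriv ψ 0 = -(3 / 4)) : Tendsto (gavrilovCoeff ψ) (𝓝 0) (𝓝 4) := by
  have hcont : ContinuousAt (gavrilovCoeff ψ) 0 := by
    unfold gavrilovCoeff
    have hne : deriv ψ 0 ≠ 0 := by rw [h0']; norm_num
    exact continuousAt_const.mul
      ((continuousAt_const.div hψ.deriv.continuousAt hne).add
        (continuousAt_const.mul hψ.continuousAt))
  have hval : gavrilovCoeff ψ 0 = 4 := by
    rw [gavrilovCoeff, h0, h0']; norm_num
  simpa only [hval] using hcont.tendsto

theorem SolvesSystem.eventually_sq_add_sq_add_eq {F G α : ℝ → ℝ → ℝ} {H c : ℝ → ℝ} {c₀ : ℝ}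
    (hc : Tendsto c (𝓝 0) (𝓝 c₀)) (hc₀ : 0 < c₀) (hc₀' : c₀ < 12)
    (hH : ∀ t, H t = t * c t) (hG : ∀ x t, G x t = 12 * x ^ 2 * t - (F x t) ^ 2 - H t)
    (hα : SolvesSystem F G α) :
    ∀ᶠ q : ℝ × ℝ in 𝓝 (1, 0), 0 ≤ H (α q.1 q.2) ∧
      (deriv (fun x => α x q.2) q.1) ^ 2 + (deriv (α q.1) q.2) ^ 2 + H (α q.1 q.2)
        = 12 * q.1 ^ 2 * α q.1 q.2 := by
  obtain ⟨hαa, hα0, -, hsys⟩ := hα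
  have hcα : Tendsto (fun q : ℝ × ℝ => c (α q.1 q.2)) (𝓝 (1, 0)) (𝓝 c₀) :=
    hc.comp (by simpa only [ContinuousAt, hα0] using hαa.continuousAt)
  have hk : Tendsto (fun q : ℝ × ℝ => 12 * q.1 ^ 2) (𝓝 (1, 0)) (𝓝 12) := by
    have hcont : Continuous fun q : ℝ × ℝ => 12 * q.1 ^ 2 := by fun_prop
    simpa using hcont.tendsto (1, 0)
  filter_upwards [hcα.eventually (eventually_gt_nhds hc₀), hcα.eventually_lt hk hc₀', hsys]
    with q hpos hlt ⟨hx, hy⟩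
  have hGq := hG q.1 (α q.1 q.2)
  have hA : 0 ≤ α q.1 q.2 := nonneg_of_mul_nonneg_left (b := 12 * q.1 ^ 2 - c (α q.1 q.2))
    (by linarith [sq_nonneg (deriv (α q.1) q.2), sq_nonneg (F q.1 (α q.1 q.2)),
      hH (α q.1 q.2)])
    (sub_pos.2 hlt)
  refine ⟨hH _ ▸ mul_nonneg hA hpos.le, ?_⟩
  rw [hx, hy, hGq]
  ring

theorem gavrilov_flow_bernoulli_general (ψ : ℝ → ℝ) (h : GavrilovODE ψ)
    (F : ℝ → ℝ → ℝ)
    (H : ℝ → ℝ) (hH : ∀ α, H α = 6*α*(1/deriv ψ α + 2*ψ α))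
    (G : ℝ → ℝ → ℝ) (hG : ∀ x α, G x α = 12*x^2*α - (F x α)^2 - H α)
    (α : ℝ → ℝ → ℝ) (hα : SolvesSystem F G α)
    (R : ℝ) (hR : 0 < R)
    (a p b uρ uφ uz : ℝ → ℝ → ℝ)
    (ha : ∀ ρ z, a ρ z = α (ρ/R) (z/R))
    (hp : ∀ ρ z, p ρ z = a ρ z * R^4 / 4)
    (hb : ∀ ρ z, b ρ z = R^3 / 4 * Real.sqrt (H (a ρ z)))
    (huρ : ∀ ρ z, uρ ρ z = (1/ρ) * deriv (p ρ) z)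
    (huφ : ∀ ρ z, uφ ρ z = (1/ρ) * b ρ z)
    (huz : ∀ ρ z, uz ρ z = -(1/ρ) * deriv (fun ρ' => p ρ' z) ρ) :
    ∀ᶠ q : ℝ × ℝ in nhds (R, 0),
      (uρ q.1 q.2)^2 + (uφ q.1 q.2)^2 + (uz q.1 q.2)^2 = 3 * p q.1 q.2 ∧
      p q.1 q.2 + ((uρ q.1 q.2)^2 + (uφ q.1 q.2)^2 + (uz q.1 q.2)^2) / 2
        = 5/2 * p q.1 q.2 := by
  obtain ⟨hψ, hψ0, hψ'0, -⟩ := h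
  have hHc (t : ℝ) : H t = t * gavrilovCoeff ψ t := by rw [hH, gavrilovCoeff]; ring
  have hscale : Tendsto (fun q : ℝ × ℝ => (q.1 / R, q.2 / R)) (𝓝 (R, 0)) (𝓝 (1, 0)) := by
    simpa [hR.ne'] using ((continuous_fst.div_const R).prodMk
      (continuous_snd.div_const R)).tendsto (R, (0 : ℝ))
  filter_upwards [hscale.eventually (hα.eventually_sq_add_sq_add_eq
      (tendsto_gavrilovCoeff hψ hψ0 hψ'0) four_pos (by norm_num) hHc hG),
    continuous_fst.tendsto (R, (0 : ℝ)) |>.eventually (eventually_ne_nhds hR.ne')]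
    with ⟨ρ, z⟩ ⟨hH0, hsum⟩ hρ
  have hpz : deriv (fun z' => p ρ z') z = R⁻¹ * deriv (α (ρ / R)) (z / R) * R ^ 4 / 4 := by
    simp only [hp, ha, deriv_div_const, deriv_mul_const_field, deriv_comp_div_const, smul_eq_mul]
  have hpρ : deriv (fun ρ' => p ρ' z) ρ
      = R⁻¹ * deriv (fun x => α x (z / R)) (ρ / R) * R ^ 4 / 4 := by
    simp only [hp, ha, deriv_div_const, deriv_mul_const_field, deriv_comp_div_const (α · (z / R)),
      smul_eq_mul]
  have hspeed : (uρ ρ z)^2 + (uφ ρ z)^2 + (uz ρ z)^2 = 3 * p ρ z := by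
    have hRne := hR.ne'
    rw [huρ, huφ, huz, hpz, hpρ, hb, hp, ha]
    linear_combination (norm := skip) (R ^ 6 / (16 * ρ ^ 2)) * (hsum + Real.sq_sqrt hH0)
    field_simp
    ring
  exact ⟨hspeed, by rw [hspeed]; ring⟩

/-- For the Gavrilov flow, `|u|² = 3p`, and hence the Bernoulli function
`B = p + |u|²/2 = (5/2)p` is a function of the pressure. -/
theorem gavrilov_flow_bernoulli (ψ : ℝ → ℝ) (h : GavrilovODE ψ)
    (F : ℝ → ℝ → ℝ) (hF : ∀ x α, F x α = -2*x*ψ α + 2*x^3)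
    (H : ℝ → ℝ) (hH : ∀ α, H α = 6*α*(1/deriv ψ α + 2*ψ α))
    (G : ℝ → ℝ → ℝ) (hG : ∀ x α, G x α = 12*x^2*α - (F x α)^2 - H α)
    (α : ℝ → ℝ → ℝ) (hα : SolvesSystem F G α)
    (R : ℝ) (hR : 0 < R)
    (a p b uρ uφ uz : ℝ → ℝ → ℝ)
    (ha : ∀ ρ z, a ρ z = α (ρ/R) (z/R))
    (hp : ∀ ρ z, p ρ z = a ρ z * R^4 / 4)
    (hb : ∀ ρ z, b ρ z = R^3 / 4 * Real.sqrt (H (a ρ z)))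
    (huρ : ∀ ρ z, uρ ρ z = (1/ρ) * deriv (p ρ) z)
    (huφ : ∀ ρ z, uφ ρ z = (1/ρ) * b ρ z)
    (huz : ∀ ρ z, uz ρ z = -(1/ρ) * deriv (fun ρ' => p ρ' z) ρ) :
    ∀ᶠ q : ℝ × ℝ in nhds (R, 0),
      (uρ q.1 q.2)^2 + (uφ q.1 q.2)^2 + (uz q.1 q.2)^2 = 3 * p q.1 q.2 ∧
      p q.1 q.2 + ((uρ q.1 q.2)^2 + (uφ q.1 q.2)^2 + (uz q.1 q.2)^2) / 2
        = 5/2 * p q.1 q.2 :=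
  gavrilov_flow_bernoulli_general ψ h F H hH G hG α hα R hR a p b uρ uφ uz ha hp hb huρ huφ huz
end
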